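/- arXiv:math/0404029 — 5 statements merged into one kernel-verified Lean document; each statement's English description precedes it below -/
import Mathlib

section
/- Let B be a G-cograded Hopf algebra and π an admissible action of G on B with associated action ρ on G. Define the deformed comultiplication Δ̃ by Δ̃(b)(1 ⊗ b') = (π_{q⁻¹} ⊗ ι)(Δ(b)(1 ⊗ b')) for b' ∈ B_q. Then Δ̃ is coassociative: (Δ̃ ⊗ ι)∘Δ̃ = (ι ⊗ Δ̃)∘Δ̃ (in the appropriate multiplier sense; in the finite-dimensional case as an equality of maps B → B⊗B⊗B). -/
open TensorProduct

/-- The subspace of `B ⊗ B` spanned by tensors `x ⊗ y` with `x ∈ P`, `y ∈ Q`. -/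
noncomputable def tensorSub {B : Type*} [Ring B] [Algebra ℂ B]
    (P Q : Submodule ℂ B) : Submodule ℂ (B ⊗[ℂ] B) :=
  Submodule.span ℂ {z | ∃ x ∈ P, ∃ y ∈ Q, z = x ⊗ₜ[ℂ] y}

/-!
Write `1 = ∑_q e_q` with `e_q ∈ B_q`. Taking `b' = π_t(e_s) ∈ B_{ρ_t(s)}` in the defining property
of `Δ̃` and using `π_{ρ_t(s)} = π_{tst⁻¹}` gives `Δ̃ ∘ π_t = ∑_s (π_{ts⁻¹} ⊗ π_t(· e_s)) ∘ Δ`.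
With this formula and coassociativity of `Δ`, both sides applied to `b` become sums of terms
`(π_{p⁻¹} ⊗ π_{q⁻¹} ⊗ ι)(Δ⁽²⁾(b)(1 ⊗ w))`, with `(p, w) = (sq, e_s ⊗ e_q)` on the left and
`w = Δ(e_p)(1 ⊗ e_q)` on the right. They agree because `e_s ⊗ e_q = ∑_p (e_s ⊗ 1)Δ(e_p)(1 ⊗ e_q)`,
where by the cograding the `p`-th summand vanishes unless `p = sq`.
-/

theorem TensorProduct.map_sum_left {R M N P Q ι : Type*} [CommSemiring R] [AddCommMonoid M]
    [AddCommMonoid N] [AddCommMonoid P] [AddCommMonoid Q] [Module R M] [Module R N] [Module R P]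
    [Module R Q] (s : Finset ι) (f : ι → M →ₗ[R] P) (g : N →ₗ[R] Q) :
    map (∑ i ∈ s, f i) g = ∑ i ∈ s, map (f i) g :=
  map_sum ((mapBilinear (RingHom.id R) M N P Q).flip g) f s

theorem TensorProduct.map_sum_right {R M N P Q ι : Type*} [CommSemiring R] [AddCommMonoid M]
    [AddCommMonoid N] [AddCommMonoid P] [AddCommMonoid Q] [Module R M] [Module R N] [Module R P]
    [Module R Q] (s : Finset ι) (f : M →ₗ[R] P) (g : ι → N →ₗ[R] Q) :
    map f (∑ i ∈ s, g i) = ∑ i ∈ s, map f (g i) :=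
  map_sum (mapBilinear (RingHom.id R) M N P Q f) g s

theorem TensorProduct.mul_one_tmul_eq_map {R A B : Type*} [CommSemiring R] [Semiring A]
    [Semiring B] [Algebra R A] [Algebra R B] (w : A ⊗[R] B) (b : B) :
    w * (1 ⊗ₜ[R] b) = map LinearMap.id (LinearMap.mulRight R b) w := by
  rw [← LinearMap.mulRight_apply (R := R), LinearMap.mulRight_tmul, LinearMap.mulRight_one]

theorem AlgEquiv.toLinearMap_comp_toLinearMap {R A : Type*} [CommSemiring R] [Semiring A]
    [Algebra R A] (f g : A ≃ₐ[R] A) : f.toLinearMap ∘ₗ g.toLinearMap = (f * g).toLinearMap :=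
  rfl

theorem AlgEquiv.toLinearMap_comp_mulRight {R A : Type*} [CommSemiring R] [Semiring A]
    [Algebra R A] (f : A ≃ₐ[R] A) (a : A) :
    f.toLinearMap ∘ₗ LinearMap.mulRight R a = LinearMap.mulRight R (f a) ∘ₗ f.toLinearMap := by
  ext x
  simp

theorem tmul_one_mul_eq_zero_of_mem_tensorSub {B : Type*} [Ring B] [Algebra ℂ B]
    {P Q : Submodule ℂ B} {a : B}
    (ha : ∀ x ∈ P, a * x = 0) {z : B ⊗[ℂ] B} (hz : z ∈ tensorSub P Q) :
    (a ⊗ₜ[ℂ] (1 : B)) * z = 0 := by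
  induction hz using Submodule.span_induction with
  | mem z hz =>
    obtain ⟨x, hx, y, -, rfl⟩ := hz
    rw [Algebra.TensorProduct.tmul_mul_tmul, ha x hx, zero_tmul]
  | zero => rw [mul_zero]
  | add u v _ _ hu hv => rw [mul_add, hu, hv, add_zero]
  | smul c u _ hu => rw [mul_smul_comm, hu, smul_zero]

section Comultiplication

open Coalgebra

theorem assoc_map_map_comp_comul {R B M N P : Type*} [CommSemiring R] [AddCommMonoid B]
    [Module R B] [Coalgebra R B] [AddCommMonoid M] [AddCommMonoid N] [AddCommMonoid P]
    [Module R M] [Module R N] [Module R P]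
    (f : B →ₗ[R] M) (g : B →ₗ[R] N) (h : B →ₗ[R] P) (b : B) :
    TensorProduct.assoc R M N P (map (map f g ∘ₗ comul) h (comul b)) =
      map f (map g h) (map LinearMap.id comul (comul b)) := by
  have hcoassoc : TensorProduct.assoc R B B B (map comul LinearMap.id (comul b)) =
      map LinearMap.id comul (comul b) := coassoc_apply b
  rw [← hcoassoc, map_map_assoc, map_map, LinearMap.comp_id]

theorem map_comp_comul_comp_mulRight {R B M : Type*} [CommSemiring R] [Semiring B]
    [Bialgebra R B] [AddCommMonoid M] [Module R M]
    (f : B →ₗ[R] M) (a c : B) :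
    map f (LinearMap.mulRight R c) ∘ₗ comul ∘ₗ LinearMap.mulRight R a =
      map f LinearMap.id ∘ₗ LinearMap.mulRight R (comul a * (1 ⊗ₜ[R] c)) ∘ₗ comul := by
  ext x
  simp only [LinearMap.comp_apply, LinearMap.mulRight_apply, Bialgebra.comul_mul, ← mul_assoc,
    mul_one_tmul_eq_map (comul x * comul a), map_map, LinearMap.id_comp, LinearMap.comp_id]

end Comultiplication

section Cograded

open Coalgebra

variable {G : Type*} [Group G] {B : Type*} [Ring B] [Bialgebra ℂ B] {ℬ : G → Submodule ℂ B}

theorem tmul_one_mul_comul_mul_one_tmul_eq_zero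
    (horth : ∀ p q : G, p ≠ q → ∀ a ∈ ℬ p, ∀ b ∈ ℬ q, a * b = 0)
    (hcograded₁ : ∀ p q : G,
      Submodule.span ℂ {z | ∃ a ∈ ℬ (p * q), ∃ b ∈ ℬ q,
        z = (Coalgebra.comul (R := ℂ) a) * (1 ⊗ₜ[ℂ] b)} = tensorSub (ℬ p) (ℬ q))
    {s p q : G} (hpq : p ≠ s * q) {a x y : B} (ha : a ∈ ℬ s) (hx : x ∈ ℬ p) (hy : y ∈ ℬ q) :
    (a ⊗ₜ[ℂ] (1 : B)) * (comul (R := ℂ) x * (1 ⊗ₜ[ℂ] y)) = 0 := by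
  have hmem : comul x * (1 ⊗ₜ[ℂ] y) ∈ tensorSub (ℬ (p * q⁻¹)) (ℬ q) :=
    hcograded₁ _ q ▸ Submodule.subset_span ⟨x, by rwa [inv_mul_cancel_right], y, hy, rfl⟩
  have hs : s ≠ p * q⁻¹ := fun h => hpq (by rw [h, inv_mul_cancel_right])
  exact tmul_one_mul_eq_zero_of_mem_tensorSub (fun z hz => horth s _ hs a ha z hz) hmem

theorem sum_sum_tmul_eq_sum_sum_comul_mul {M : Type*} [AddCommMonoid M] [Module ℂ M]
    (horth : ∀ p q : G, p ≠ q → ∀ a ∈ ℬ p, ∀ b ∈ ℬ q, a * b = 0)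
    (hcograded₁ : ∀ p q : G,
      Submodule.span ℂ {z | ∃ a ∈ ℬ (p * q), ∃ b ∈ ℬ q,
        z = (Coalgebra.comul (R := ℂ) a) * (1 ⊗ₜ[ℂ] b)} = tensorSub (ℬ p) (ℬ q))
    {S : Finset G} {e : G → B} (he : ∀ q, e q ∈ ℬ q) (hsum : ∑ q ∈ S, e q = 1)
    (F : G → G → B ⊗[ℂ] (B ⊗[ℂ] B) →ₗ[ℂ] M) (y : B ⊗[ℂ] (B ⊗[ℂ] B)) :
    ∑ q ∈ S, ∑ s ∈ S, F (s * q) q (y * (1 ⊗ₜ[ℂ] (e s ⊗ₜ[ℂ] e q))) =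
      ∑ p ∈ S, ∑ q ∈ S, F p q (y * (1 ⊗ₜ[ℂ] (comul (R := ℂ) (e p) * (1 ⊗ₜ[ℂ] e q)))) := by
  have hsplit : ∀ s q, e s ⊗ₜ[ℂ] e q =
      ∑ p ∈ S, (e s ⊗ₜ[ℂ] (1 : B)) * (comul (R := ℂ) (e p) * (1 ⊗ₜ[ℂ] e q)) := by
    intro s q
    rw [← Finset.mul_sum, ← Finset.sum_mul, ← map_sum, hsum, Bialgebra.comul_one, one_mul,
      Algebra.TensorProduct.tmul_mul_tmul, mul_one, one_mul]
  have hreindex : ∀ s p q, F (s * q) q (y * (1 ⊗ₜ[ℂ]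
      ((e s ⊗ₜ[ℂ] (1 : B)) * (comul (R := ℂ) (e p) * (1 ⊗ₜ[ℂ] e q))))) =
      F p q (y * (1 ⊗ₜ[ℂ] ((e s ⊗ₜ[ℂ] (1 : B)) * (comul (R := ℂ) (e p) * (1 ⊗ₜ[ℂ] e q))))) := by
    intro s p q
    by_cases hpq : p = s * q
    · rw [hpq]
    · rw [tmul_one_mul_comul_mul_one_tmul_eq_zero horth hcograded₁ hpq (he s) (he p) (he q),
        tmul_zero, mul_zero, map_zero, map_zero]
  have hunit : ∑ s ∈ S, e s ⊗ₜ[ℂ] (1 : B) = 1 := by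
    rw [← sum_tmul, hsum, Algebra.TensorProduct.one_def]
  calc ∑ q ∈ S, ∑ s ∈ S, F (s * q) q (y * (1 ⊗ₜ[ℂ] (e s ⊗ₜ[ℂ] e q)))
      = ∑ q ∈ S, ∑ s ∈ S, ∑ p ∈ S, F p q (y * (1 ⊗ₜ[ℂ]
          ((e s ⊗ₜ[ℂ] (1 : B)) * (comul (R := ℂ) (e p) * (1 ⊗ₜ[ℂ] e q))))) := by
        simp only [hsplit, tmul_sum, Finset.mul_sum, map_sum, hreindex]
    _ = ∑ p ∈ S, ∑ q ∈ S, ∑ s ∈ S, F p q (y * (1 ⊗ₜ[ℂ]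
          ((e s ⊗ₜ[ℂ] (1 : B)) * (comul (R := ℂ) (e p) * (1 ⊗ₜ[ℂ] e q))))) :=
        (Finset.sum_congr rfl fun q _ => Finset.sum_comm).trans Finset.sum_comm
    _ = ∑ p ∈ S, ∑ q ∈ S, F p q (y * (1 ⊗ₜ[ℂ] (comul (R := ℂ) (e p) * (1 ⊗ₜ[ℂ] e q)))) := by
        simp only [← map_sum, ← Finset.mul_sum, ← tmul_sum, ← Finset.sum_mul, hunit, one_mul]

end Cograded

section Deformed

open Coalgebra

variable {G : Type*} [Group G] {R B : Type*} [CommSemiring R] [Semiring B] [Bialgebra R B]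
  {S : Finset G} {e : G → B} {π : G →* (B ≃ₐ[R] B)} {Δt : B →ₗ[R] B ⊗[R] B}

theorem comp_toLinearMap_eq_sum {ℬ : G → Submodule R B} (ρ : G → G → G)
    (hπΔ : ∀ (p : G) (b : B), comul (R := R) (π p b) =
      map (π p).toLinearMap (π p).toLinearMap (comul b))
    (hπℬ : ∀ p q : G, (ℬ q).map (π p).toLinearMap = ℬ (ρ p q))
    (hπρ : ∀ p q : G, π (ρ p q) = π (p * q * p⁻¹))
    (hΔt : ∀ (b : B) (q : G), ∀ b' ∈ ℬ q,
      Δt b * (1 ⊗ₜ[R] b') = map (π q⁻¹).toLinearMap LinearMap.id (comul b * (1 ⊗ₜ[R] b')))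
    (he : ∀ q, e q ∈ ℬ q) (hsum : ∑ q ∈ S, e q = 1) (t : G) :
    Δt ∘ₗ (π t).toLinearMap = ∑ s ∈ S, map (π (t * s⁻¹)).toLinearMap
      ((π t).toLinearMap ∘ₗ LinearMap.mulRight R (e s)) ∘ₗ comul := by
  have hmem : ∀ s, π t (e s) ∈ ℬ (ρ t s) := fun s => hπℬ t s ▸ Submodule.mem_map_of_mem (he s)
  have hconj : ∀ s, π (ρ t s)⁻¹ * π t = π (t * s⁻¹) := by
    intro s
    rw [map_inv, hπρ, ← map_inv, ← map_mul]
    congr 1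
    group
  ext x
  simp only [LinearMap.sum_apply, LinearMap.comp_apply, AlgEquiv.toLinearMap_apply]
  calc Δt (π t x) = ∑ s ∈ S, Δt (π t x) * (1 ⊗ₜ[R] π t (e s)) := by
        rw [← Finset.mul_sum, ← tmul_sum, ← map_sum, hsum, map_one,
          ← Algebra.TensorProduct.one_def, mul_one]
    _ = ∑ s ∈ S, map (π (ρ t s)⁻¹).toLinearMap LinearMap.id
          (comul (π t x) * (1 ⊗ₜ[R] π t (e s))) :=
        Finset.sum_congr rfl fun s _ => hΔt _ _ _ (hmem s)
    _ = _ := by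
        refine Finset.sum_congr rfl fun s _ => ?_
        rw [hπΔ, mul_one_tmul_eq_map, map_map, map_map, LinearMap.id_comp, LinearMap.comp_id,
          ← AlgEquiv.toLinearMap_comp_mulRight, AlgEquiv.toLinearMap_comp_toLinearMap, hconj]

theorem apply_eq_sum_of_comp_toLinearMap_eq_sum
    (hcut : ∀ t, Δt ∘ₗ (π t).toLinearMap = ∑ s ∈ S, map (π (t * s⁻¹)).toLinearMap
      ((π t).toLinearMap ∘ₗ LinearMap.mulRight R (e s)) ∘ₗ comul) (b : B) :
    Δt b = ∑ q ∈ S, map (π q⁻¹).toLinearMap (LinearMap.mulRight R (e q)) (comul b) := by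
  simpa only [map_one, AlgEquiv.one_toLinearMap, Module.End.one_eq_id, LinearMap.comp_id,
    LinearMap.id_comp, one_mul, LinearMap.sum_apply, LinearMap.comp_apply]
    using LinearMap.congr_fun (hcut 1) b

theorem assoc_map_apply_eq_sum
    (hcut : ∀ t, Δt ∘ₗ (π t).toLinearMap = ∑ s ∈ S, map (π (t * s⁻¹)).toLinearMap
      ((π t).toLinearMap ∘ₗ LinearMap.mulRight R (e s)) ∘ₗ comul) (b : B) :
    TensorProduct.assoc R B B B (map Δt LinearMap.id (Δt b)) =
      ∑ q ∈ S, ∑ s ∈ S, map (π (s * q)⁻¹).toLinearMap (map (π q⁻¹).toLinearMap LinearMap.id)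
        (map LinearMap.id comul (comul b) * (1 ⊗ₜ[R] (e s ⊗ₜ[R] e q))) := by
  rw [apply_eq_sum_of_comp_toLinearMap_eq_sum hcut b, map_sum, map_sum]
  refine Finset.sum_congr rfl fun q _ => ?_
  rw [map_map, LinearMap.id_comp, hcut, map_sum_left, LinearMap.sum_apply, map_sum]
  refine Finset.sum_congr rfl fun s _ => ?_
  rw [assoc_map_map_comp_comul, mul_inv_rev]
  conv_rhs => rw [mul_one_tmul_eq_map, LinearMap.mulRight_tmul, map_map, ← map_comp]
  simp only [LinearMap.comp_id, LinearMap.id_comp]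

theorem map_id_apply_eq_sum
    (hcut : ∀ t, Δt ∘ₗ (π t).toLinearMap = ∑ s ∈ S, map (π (t * s⁻¹)).toLinearMap
      ((π t).toLinearMap ∘ₗ LinearMap.mulRight R (e s)) ∘ₗ comul) (b : B) :
    map LinearMap.id Δt (Δt b) =
      ∑ p ∈ S, ∑ q ∈ S, map (π p⁻¹).toLinearMap (map (π q⁻¹).toLinearMap LinearMap.id)
        (map LinearMap.id comul (comul b) * (1 ⊗ₜ[R] (comul (e p) * (1 ⊗ₜ[R] e q)))) := by
  rw [apply_eq_sum_of_comp_toLinearMap_eq_sum hcut b, map_sum]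
  refine Finset.sum_congr rfl fun p _ => ?_
  have hcomp : Δt ∘ₗ LinearMap.mulRight R (e p) = ∑ q ∈ S,
      map (π q⁻¹).toLinearMap (LinearMap.mulRight R (e q)) ∘ₗ comul ∘ₗ
        LinearMap.mulRight R (e p) := by
    ext x
    simp only [LinearMap.comp_apply, LinearMap.sum_apply,
      apply_eq_sum_of_comp_toLinearMap_eq_sum hcut]
  rw [map_map, LinearMap.id_comp, hcomp, map_sum_right, LinearMap.sum_apply]
  refine Finset.sum_congr rfl fun q _ => ?_
  rw [map_comp_comul_comp_mulRight, mul_one_tmul_eq_map (R := R) (A := B) (B := B ⊗[R] B),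
    map_map, map_map]
  simp only [LinearMap.comp_id, ← LinearMap.comp_assoc]

end Deformed

theorem deformed_comultiplication_coassociative_general
    {G : Type*} [Group G] [DecidableEq G] {B : Type*} [Ring B] [HopfAlgebra ℂ B]
    (ℬ : G → Submodule ℂ B)
    (hdec : DirectSum.IsInternal ℬ)
    (horth : ∀ p q : G, p ≠ q → ∀ a ∈ ℬ p, ∀ b ∈ ℬ q, a * b = 0)
    (hcograded₁ : ∀ p q : G,
      Submodule.span ℂ {z | ∃ a ∈ ℬ (p * q), ∃ b ∈ ℬ q,
        z = (Coalgebra.comul (R := ℂ) a) * (1 ⊗ₜ[ℂ] b)} = tensorSub (ℬ p) (ℬ q))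
    -- the admissible action
    (π : G →* (B ≃ₐ[ℂ] B)) (ρ : G → G → G)
    (hπΔ : ∀ (p : G) (b : B), Coalgebra.comul (R := ℂ) (π p b) =
      (TensorProduct.map (π p).toLinearMap (π p).toLinearMap) (Coalgebra.comul (R := ℂ) b))
    (hπℬ : ∀ p q : G, (ℬ q).map (π p).toLinearMap = ℬ (ρ p q))
    (hπρ : ∀ p q : G, π (ρ p q) = π (p * q * p⁻¹))
    -- the deformed comultiplication
    (Δt : B →ₗ[ℂ] B ⊗[ℂ] B)
    (hΔt : ∀ (b : B) (q : G), ∀ b' ∈ ℬ q,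
      Δt b * (1 ⊗ₜ[ℂ] b') = (TensorProduct.map (π q⁻¹).toLinearMap LinearMap.id)
        (Coalgebra.comul (R := ℂ) b * (1 ⊗ₜ[ℂ] b'))) :
    (TensorProduct.assoc ℂ B B B).toLinearMap ∘ₗ (TensorProduct.map Δt LinearMap.id) ∘ₗ Δt
      = (TensorProduct.map LinearMap.id Δt) ∘ₗ Δt := by
  obtain ⟨e, he, hsum⟩ := (Submodule.mem_iSup_iff_exists_finsupp ℬ (1 : B)).mp
    (hdec.submodule_iSup_eq_top ▸ Submodule.mem_top)
  replace hsum : ∑ q ∈ e.support, e q = 1 := hsum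
  have hcut := comp_toLinearMap_eq_sum ρ hπΔ hπℬ hπρ hΔt he hsum
  ext b
  rw [LinearMap.comp_apply, LinearMap.comp_apply, LinearMap.comp_apply, LinearEquiv.coe_coe,
    assoc_map_apply_eq_sum hcut, map_id_apply_eq_sum hcut]
  exact sum_sum_tmul_eq_sum_sum_comul_mul horth hcograded₁ he hsum
    (fun p q => map (π p⁻¹).toLinearMap (map (π q⁻¹).toLinearMap LinearMap.id)) _

/-- Let `B = ⊕_p B_p` be a `G`-cograded Hopf algebra and `π` an
admissible action of `G` on `B` (each `π_p` an algebra automorphism respecting `Δ`,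
with `π_p(B_q) = B_{ρ_p(q)}` and `π_{ρ_p(q)} = π_{pqp⁻¹}`).  The deformed
comultiplication `Δ̃`, determined by `Δ̃(b)(1 ⊗ b') = (π_{q⁻¹} ⊗ ι)(Δ(b)(1 ⊗ b'))`
for `b' ∈ B_q`, is coassociative. -/
theorem deformed_comultiplication_coassociative
    {G : Type*} [Group G] [DecidableEq G] {B : Type*} [Ring B] [HopfAlgebra ℂ B]
    (ℬ : G → Submodule ℂ B)
    (hdec : DirectSum.IsInternal ℬ)
    (horth : ∀ p q : G, p ≠ q → ∀ a ∈ ℬ p, ∀ b ∈ ℬ q, a * b = 0)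
    (hcograded₁ : ∀ p q : G,
      Submodule.span ℂ {z | ∃ a ∈ ℬ (p * q), ∃ b ∈ ℬ q,
        z = (Coalgebra.comul (R := ℂ) a) * (1 ⊗ₜ[ℂ] b)} = tensorSub (ℬ p) (ℬ q))
    (hcograded₂ : ∀ p q : G,
      Submodule.span ℂ {z | ∃ a ∈ ℬ (p * q), ∃ b ∈ ℬ p,
        z = (b ⊗ₜ[ℂ] 1) * (Coalgebra.comul (R := ℂ) a)} = tensorSub (ℬ p) (ℬ q))
    -- the admissible action
    (π : G →* (B ≃ₐ[ℂ] B)) (ρ : G → G → G)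
    (hπΔ : ∀ (p : G) (b : B), Coalgebra.comul (R := ℂ) (π p b) =
      (TensorProduct.map (π p).toLinearMap (π p).toLinearMap) (Coalgebra.comul (R := ℂ) b))
    (hπℬ : ∀ p q : G, (ℬ q).map (π p).toLinearMap = ℬ (ρ p q))
    (hπρ : ∀ p q : G, π (ρ p q) = π (p * q * p⁻¹))
    -- the deformed comultiplication
    (Δt : B →ₗ[ℂ] B ⊗[ℂ] B)
    (hΔt : ∀ (b : B) (q : G), ∀ b' ∈ ℬ q,
      Δt b * (1 ⊗ₜ[ℂ] b') = (TensorProduct.map (π q⁻¹).toLinearMap LinearMap.id)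
        (Coalgebra.comul (R := ℂ) b * (1 ⊗ₜ[ℂ] b'))) :
    (TensorProduct.assoc ℂ B B B).toLinearMap ∘ₗ (TensorProduct.map Δt LinearMap.id) ∘ₗ Δt
      = (TensorProduct.map LinearMap.id Δt) ∘ₗ Δt :=
  deformed_comultiplication_coassociative_general ℬ hdec horth hcograded₁ π ρ hπΔ hπℬ hπρ Δt hΔt
end

section
/- Let B be a G-cograded Hopf algebra with counit ε, and π an admissible action of G on B. Then the original counit ε is also a counit for the deformed comultiplication Δ̃: (ε ⊗ ι)(Δ̃(b)(1 ⊗ b')) = bb' and (ι ⊗ ε)((b' ⊗ 1)Δ̃(b)) = b'b for all b ∈ B_p, b' ∈ B_q. -/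
/-!
An injective linear map intertwining the comultiplications also preserves the counit (by
uniqueness of the counit), so `ε ∘ π_g = ε`, and the first identity is the counit axiom for `Δ`
twisted by `π_{q⁻¹}`. For the second one, `ε` must vanish on `B_r` for `r ≠ e`: the cograding
writes `B_r ⊗ B_q` as the span of `Δ(B_{rq})(1 ⊗ B_q)`, which `ε ⊗ ι` sends into `B_{rq} B_q = 0`,
while it sends `a ⊗ c` to `ε(a) c`. Hence `(ι ⊗ ε)(Δ̃(b)(1 ⊗ c)) = ε(c) π_{q⁻¹}(b) = ε(c) b` for
`c ∈ B_q`, and taking `c = 1` gives `(ι ⊗ ε) Δ̃(b) = b`.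
-/

open TensorProduct

namespace Coalgebra
variable {R A C : Type*} [CommSemiring R] [AddCommMonoid A] [Module R A] [Coalgebra R A]
  [AddCommMonoid C] [Module R C] [Coalgebra R C]

theorem counit_eq_of_lTensor_comul {φ : A →ₗ[R] R}
    (h : ∀ a, φ.lTensor A (comul a) = a ⊗ₜ 1) : φ = counit := by
  ext a
  have h₁ : map counit φ (comul a) = 1 ⊗ₜ φ a := by
    rw [← LinearMap.lTensor_comp_rTensor, LinearMap.comp_apply, rTensor_counit_comul,
      LinearMap.lTensor_tmul]
  have h₂ : map counit φ (comul a) = counit a ⊗ₜ 1 := by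
    rw [← LinearMap.rTensor_comp_lTensor, LinearMap.comp_apply, h, LinearMap.rTensor_tmul]
  simpa using congrArg (_root_.TensorProduct.lid R R) (h₁.symm.trans h₂)

theorem counit_comp_of_comul_comp {f : A →ₗ[R] C} (hf : Function.Injective f)
    (hΔ : ∀ a, comul (f a) = map f f (comul a)) : counit ∘ₗ f = (counit : A →ₗ[R] R) := by
  refine counit_eq_of_lTensor_comul fun a =>
    Module.Flat.rTensor_preserves_injective_linearMap (M := R) f hf ?_
  calc f.rTensor R ((counit ∘ₗ f).lTensor A (comul a))
      = (counit : C →ₗ[R] R).lTensor C (map f f (comul a)) := by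
        rw [← LinearMap.comp_apply (f.rTensor R), ← LinearMap.comp_apply (counit.lTensor C),
          LinearMap.rTensor_comp_lTensor, LinearMap.lTensor_comp_map]
    _ = f.rTensor R (a ⊗ₜ 1) := by rw [← hΔ, lTensor_counit_comul, LinearMap.rTensor_tmul]

end Coalgebra

namespace TensorProduct

section
variable {R A : Type*} [CommSemiring R] [Semiring A] [Algebra R A]

theorem lid_rTensor_mul_one_tmul (φ : A →ₗ[R] R) (t : A ⊗[R] A) (c : A) :
    TensorProduct.lid R A (φ.rTensor A (t * (1 ⊗ₜ c))) =
      TensorProduct.lid R A (φ.rTensor A t) * c := by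
  induction t using TensorProduct.induction_on with
  | zero => simp
  | tmul x y => simp
  | add s t hs ht => simp only [add_mul, map_add, hs, ht]

theorem rid_lTensor_tmul_one_mul (φ : A →ₗ[R] R) (t : A ⊗[R] A) (c : A) :
    TensorProduct.rid R A (φ.lTensor A ((c ⊗ₜ 1) * t)) =
      c * TensorProduct.rid R A (φ.lTensor A t) := by
  induction t using TensorProduct.induction_on with
  | zero => simp
  | tmul x y => simp
  | add s t hs ht => simp only [mul_add, map_add, hs, ht]

end

theorem rid_lTensor_counit_mul_one_tmul {R A : Type*} [CommSemiring R] [Semiring A]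
    [Bialgebra R A] (t : A ⊗[R] A) (c : A) :
    TensorProduct.rid R A ((Coalgebra.counit : A →ₗ[R] R).lTensor A (t * (1 ⊗ₜ c))) =
      Coalgebra.counit (R := R) c •
        TensorProduct.rid R A ((Coalgebra.counit : A →ₗ[R] R).lTensor A t) := by
  induction t using TensorProduct.induction_on with
  | zero => simp
  | tmul x y => simp [mul_smul, mul_comm]
  | add s t hs ht => simp only [add_mul, map_add, hs, ht, smul_add]

end TensorProduct

theorem counit_eq_zero_of_mem_of_ne_one {G B : Type*} [Group G] [Ring B] [Bialgebra ℂ B]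
    {ℬ : G → Submodule ℂ B} (hℬ : iSup ℬ = ⊤)
    (horth : ∀ p q : G, p ≠ q → ∀ a ∈ ℬ p, ∀ b ∈ ℬ q, a * b = 0)
    (hcograded₁ : ∀ p q : G,
      Submodule.span ℂ {z | ∃ a ∈ ℬ (p * q), ∃ b ∈ ℬ q,
        z = (Coalgebra.comul (R := ℂ) a) * (1 ⊗ₜ[ℂ] b)} = tensorSub (ℬ p) (ℬ q))
    {r : G} (hr : r ≠ 1) {a : B} (ha : a ∈ ℬ r) : Coalgebra.counit (R := ℂ) a = 0 := by
  set L := (TensorProduct.lid ℂ B).toLinearMap ∘ₗ (Coalgebra.counit : B →ₗ[ℂ] ℂ).rTensor B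
  have hsmul : ∀ q, ∀ c ∈ ℬ q, Coalgebra.counit (R := ℂ) a • c = 0 := by
    intro q c hc
    have hker : tensorSub (ℬ r) (ℬ q) ≤ LinearMap.ker L := by
      rw [← hcograded₁, Submodule.span_le]
      rintro _ ⟨x, hx, y, hy, rfl⟩
      have hxy : x * y = 0 := horth (r * q) q (by simpa using hr) x hx y hy
      simp only [SetLike.mem_coe, LinearMap.mem_ker, L, LinearMap.comp_apply,
        LinearEquiv.coe_coe, TensorProduct.lid_rTensor_mul_one_tmul,
        Coalgebra.rTensor_counit_comul, TensorProduct.lid_tmul, one_smul, hxy]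
    simpa only [LinearMap.mem_ker, L, LinearMap.comp_apply, LinearEquiv.coe_coe,
      LinearMap.rTensor_tmul, TensorProduct.lid_tmul]
      using hker (Submodule.subset_span ⟨a, ha, c, hc, rfl⟩)
  have h1 : Coalgebra.counit (R := ℂ) a • (1 : B) = 0 :=
    Submodule.iSup_induction ℬ (motive := fun c => Coalgebra.counit (R := ℂ) a • c = 0)
      (hℬ ▸ Submodule.mem_top) hsmul (smul_zero _)
      fun x y hx hy => by rw [smul_add, hx, hy, add_zero]
  simpa using congrArg (Coalgebra.counit (R := ℂ)) h1

theorem rid_lTensor_counit_deformed_comul {R G B : Type*} [CommSemiring R] [Group G]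
    [Semiring B] [Bialgebra R B] {ℬ : G → Submodule R B} (hℬ : iSup ℬ = ⊤)
    (hε : ∀ r ≠ 1, ∀ a ∈ ℬ r, Coalgebra.counit (R := R) a = 0)
    (π : G →* (B ≃ₐ[R] B)) (Δt : B →ₗ[R] B ⊗[R] B)
    (hΔt : ∀ (b : B) (q : G), ∀ b' ∈ ℬ q,
      Δt b * (1 ⊗ₜ[R] b') = (TensorProduct.map (π q⁻¹).toLinearMap LinearMap.id)
        (Coalgebra.comul (R := R) b * (1 ⊗ₜ[R] b')))
    (b : B) : TensorProduct.rid R B ((Coalgebra.counit : B →ₗ[R] R).lTensor B (Δt b)) = b := by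
  set ε : B →ₗ[R] R := Coalgebra.counit
  have hcomul : ∀ c,
      TensorProduct.rid R B (ε.lTensor B (Coalgebra.comul b * (1 ⊗ₜ c))) = ε c • b := fun c => by
    rw [TensorProduct.rid_lTensor_counit_mul_one_tmul, Coalgebra.lTensor_counit_comul,
      TensorProduct.rid_tmul, one_smul]
  have hnat : ∀ (f : B →ₗ[R] B) t, TensorProduct.rid R B (ε.lTensor B (map f LinearMap.id t)) =
      f (TensorProduct.rid R B (ε.lTensor B t)) := fun f t => by
    rw [LinearMap.lTensor_def, map_map, LinearMap.id_comp, LinearMap.comp_id]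
    exact LinearMap.congr_fun (CoassocSimps.rid_comp_map f ε) t
  have key : ∀ c, TensorProduct.rid R B (ε.lTensor B (Δt b * (1 ⊗ₜ c))) = ε c • b := by
    intro c
    refine Submodule.iSup_induction ℬ (motive := fun c =>
      TensorProduct.rid R B (ε.lTensor B (Δt b * (1 ⊗ₜ c))) = ε c • b)
      (hℬ ▸ Submodule.mem_top) (fun q c hc => ?_) (by simp) fun x y hx hy => ?_
    · rw [hΔt b q c hc, hnat, hcomul, map_smul]
      by_cases hq : q = 1
      · simp [hq]
      · simp [hε q hq c hc]
    · rw [tmul_add, mul_add, map_add, map_add, hx, hy, map_add, add_smul]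
  simpa [← Algebra.TensorProduct.one_def, ε] using key 1

theorem deformed_comultiplication_counit_general
    {G : Type*} [Group G] [DecidableEq G] {B : Type*} [Ring B] [HopfAlgebra ℂ B]
    (ℬ : G → Submodule ℂ B)
    (hdec : DirectSum.IsInternal ℬ)
    (horth : ∀ p q : G, p ≠ q → ∀ a ∈ ℬ p, ∀ b ∈ ℬ q, a * b = 0)
    (hcograded₁ : ∀ p q : G,
      Submodule.span ℂ {z | ∃ a ∈ ℬ (p * q), ∃ b ∈ ℬ q,
        z = (Coalgebra.comul (R := ℂ) a) * (1 ⊗ₜ[ℂ] b)} = tensorSub (ℬ p) (ℬ q))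
    -- the admissible action
    (π : G →* (B ≃ₐ[ℂ] B))
    (hπΔ : ∀ (p : G) (b : B), Coalgebra.comul (R := ℂ) (π p b) =
      (TensorProduct.map (π p).toLinearMap (π p).toLinearMap) (Coalgebra.comul (R := ℂ) b))
    -- the deformed comultiplication
    (Δt : B →ₗ[ℂ] B ⊗[ℂ] B)
    (hΔt : ∀ (b : B) (q : G), ∀ b' ∈ ℬ q,
      Δt b * (1 ⊗ₜ[ℂ] b') = (TensorProduct.map (π q⁻¹).toLinearMap LinearMap.id)
        (Coalgebra.comul (R := ℂ) b * (1 ⊗ₜ[ℂ] b'))) :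
    ∀ p q : G, ∀ b ∈ ℬ p, ∀ b' ∈ ℬ q,
      (TensorProduct.lid ℂ B) ((TensorProduct.map (Coalgebra.counit (R := ℂ)) LinearMap.id)
        (Δt b * (1 ⊗ₜ[ℂ] b'))) = b * b' ∧
      (TensorProduct.rid ℂ B) ((TensorProduct.map LinearMap.id (Coalgebra.counit (R := ℂ)))
        ((b' ⊗ₜ[ℂ] (1 : B)) * Δt b)) = b' * b := by
  intro p q b _ b' hb'
  have hℬ := hdec.submodule_iSup_eq_top
  have hε : ∀ r ≠ 1, ∀ a ∈ ℬ r, Coalgebra.counit (R := ℂ) a = 0 := fun r hr a ha =>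
    counit_eq_zero_of_mem_of_ne_one hℬ horth hcograded₁ hr ha
  have hεπ : Coalgebra.counit ∘ₗ (π q⁻¹).toLinearMap = Coalgebra.counit :=
    Coalgebra.counit_comp_of_comul_comp (π q⁻¹).injective (hπΔ q⁻¹)
  constructor
  · rw [hΔt b q b' hb', TensorProduct.map_map, hεπ, LinearMap.id_comp, ← LinearMap.rTensor_def,
      TensorProduct.lid_rTensor_mul_one_tmul, Coalgebra.rTensor_counit_comul,
      TensorProduct.lid_tmul, one_smul]
  · rw [← LinearMap.lTensor_def, TensorProduct.rid_lTensor_tmul_one_mul,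
      rid_lTensor_counit_deformed_comul hℬ hε π Δt hΔt]

/-- the original counit `ε` is also a counit for the deformed
comultiplication `Δ̃`: `(ε ⊗ ι)(Δ̃(b)(1 ⊗ b')) = b·b'` and
`(ι ⊗ ε)((b' ⊗ 1)Δ̃(b)) = b'·b` for `b ∈ B_p`, `b' ∈ B_q`. -/
theorem deformed_comultiplication_counit
    {G : Type*} [Group G] [DecidableEq G] {B : Type*} [Ring B] [HopfAlgebra ℂ B]
    (ℬ : G → Submodule ℂ B)
    (hdec : DirectSum.IsInternal ℬ)
    (horth : ∀ p q : G, p ≠ q → ∀ a ∈ ℬ p, ∀ b ∈ ℬ q, a * b = 0)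
    (hcograded₁ : ∀ p q : G,
      Submodule.span ℂ {z | ∃ a ∈ ℬ (p * q), ∃ b ∈ ℬ q,
        z = (Coalgebra.comul (R := ℂ) a) * (1 ⊗ₜ[ℂ] b)} = tensorSub (ℬ p) (ℬ q))
    (hcograded₂ : ∀ p q : G,
      Submodule.span ℂ {z | ∃ a ∈ ℬ (p * q), ∃ b ∈ ℬ p,
        z = (b ⊗ₜ[ℂ] 1) * (Coalgebra.comul (R := ℂ) a)} = tensorSub (ℬ p) (ℬ q))
    -- the admissible action
    (π : G →* (B ≃ₐ[ℂ] B)) (ρ : G → G → G)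
    (hπΔ : ∀ (p : G) (b : B), Coalgebra.comul (R := ℂ) (π p b) =
      (TensorProduct.map (π p).toLinearMap (π p).toLinearMap) (Coalgebra.comul (R := ℂ) b))
    (hπℬ : ∀ p q : G, (ℬ q).map (π p).toLinearMap = ℬ (ρ p q))
    (hπρ : ∀ p q : G, π (ρ p q) = π (p * q * p⁻¹))
    -- the deformed comultiplication
    (Δt : B →ₗ[ℂ] B ⊗[ℂ] B)
    (hΔt : ∀ (b : B) (q : G), ∀ b' ∈ ℬ q,
      Δt b * (1 ⊗ₜ[ℂ] b') = (TensorProduct.map (π q⁻¹).toLinearMap LinearMap.id)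
        (Coalgebra.comul (R := ℂ) b * (1 ⊗ₜ[ℂ] b'))) :
    ∀ p q : G, ∀ b ∈ ℬ p, ∀ b' ∈ ℬ q,
      (TensorProduct.lid ℂ B) ((TensorProduct.map (Coalgebra.counit (R := ℂ)) LinearMap.id)
        (Δt b * (1 ⊗ₜ[ℂ] b'))) = b * b' ∧
      (TensorProduct.rid ℂ B) ((TensorProduct.map LinearMap.id (Coalgebra.counit (R := ℂ)))
        ((b' ⊗ₜ[ℂ] (1 : B)) * Δt b)) = b' * b :=
  deformed_comultiplication_counit_general ℬ hdec horth hcograded₁ π hπΔ Δt hΔt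
end

section
/- Let B be a G-cograded Hopf algebra with antipode S and π an admissible action. Define S̃(b) = π_{p⁻¹}(S(b)) for b ∈ B_p. Then S̃ is an antipode for (B, Δ̃): m((S̃ ⊗ ι)(Δ̃(b)(1 ⊗ b'))) = ε(b)b' and m((ι ⊗ S̃)((b' ⊗ 1)Δ̃(b))) = ε(b)b' for all b ∈ B_p, b' ∈ B_q. -/
/-!
On the summands of `Δ(b)(1 ⊗ b') ∈ B_{pq⁻¹} ⊗ B_q` one has `S̃ ∘ π_{q⁻¹} = π_{p⁻¹} ∘ S`, so the
first expression is `m((π_{p⁻¹} S ⊗ ι)(Δ(b)(1 ⊗ b')))`. If `π_p = 1` this is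
`m((S ⊗ ι)Δ(b)) b' = ε(b) b'`; otherwise both sides vanish, because `S` maps `B_g` to `B_{g⁻¹}`
and `ε` vanishes on `B_p` for `p ≠ 1`.

For the second, split `1 = ∑ e_h` along the grading. The `h`-th summand of `(b' ⊗ 1) Δ̃(b)` is
`(π_{h⁻¹} ⊗ ι)((π_h(b') ⊗ 1) Δ(b) (1 ⊗ e_h))`, and `(π_h(b') ⊗ 1) Δ(b)` lies in
`B_{ρ(h,q)} ⊗ B_{ρ(h,q)⁻¹p}`; so the summand survives only if `ρ(h,q)⁻¹ p = h`, and then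
contributes `π_{h⁻¹}(π_h(b') ε(b)) = ε(b) b'`. Such an `h` is unique, since `π_h` is then
determined by `π_p = π_h π_q`; when `ε(b) b' ≠ 0` it exists, and `h = ρ(q⁻¹, q⁻¹)` works because
`S` does not vanish on `B_{q⁻¹}`.
-/

open TensorProduct

open WithConv

section TensorAlgebra

variable {R A B : Type*} [CommSemiring R] [Semiring A] [Algebra R A] [Semiring B] [Algebra R B]

theorem LinearMap.mul'_map_mul_one_tmul (f : B →ₗ[R] B) (z : B ⊗[R] B) (c : B) :
    mul' R B (map f id (z * (1 ⊗ₜ c))) = mul' R B (map f id z) * c := by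
  induction z using TensorProduct.induction_on with
  | zero => simp
  | tmul x y => simp [mul_assoc]
  | add z₁ z₂ h₁ h₂ => simp only [add_mul, map_add, h₁, h₂]

theorem LinearMap.mul'_map_tmul_one_mul (f : B →ₗ[R] B) (z : B ⊗[R] B) (c : B) :
    mul' R B (map id f ((c ⊗ₜ 1) * z)) = c * mul' R B (map id f z) := by
  induction z using TensorProduct.induction_on with
  | zero => simp
  | tmul x y => simp [mul_assoc]
  | add z₁ z₂ h₁ h₂ => simp only [mul_add, map_add, h₁, h₂]

theorem AlgEquiv.tmul_one_mul_map_id (f : A ≃ₐ[R] B) (x : A) (z : A ⊗[R] A) :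
    (f x ⊗ₜ[R] (1 : A)) * map f.toLinearMap LinearMap.id z =
      map f.toLinearMap LinearMap.id ((x ⊗ₜ 1) * z) :=
  (map_mul (Algebra.TensorProduct.map f.toAlgHom (AlgHom.id R A)) (x ⊗ₜ 1) z).symm

end TensorAlgebra

theorem LinearMap.convMul_comp_of_comul_comp {R A B C : Type*} [CommSemiring R] [Semiring A]
    [Algebra R A] [AddCommMonoid B] [Module R B] [Coalgebra R B] [AddCommMonoid C] [Module R C]
    [Coalgebra R C] (f g : WithConv (C →ₗ[R] A)) (h : B →ₗ[R] C)
    (hh : Coalgebra.comul ∘ₗ h = map h h ∘ₗ Coalgebra.comul) :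
    (f * g).ofConv ∘ₗ h = (toConv (f.ofConv ∘ₗ h) * toConv (g.ofConv ∘ₗ h)).ofConv := by
  simp [convMul_def, comp_assoc, hh, map_comp]

/-- `S ∘ φ` is a left and `φ ∘ S` a right convolution inverse of `φ`: for the left one,
`η ∘ ε ∘ φ = 1` follows from `(η ∘ ε ∘ φ) * φ = φ` by multiplying with `φ ∘ S`. -/
theorem HopfAlgebra.antipode_comp_algHom {R A B : Type*} [CommSemiring R] [Semiring A]
    [HopfAlgebra R A] [Semiring B] [HopfAlgebra R B] (φ : A →ₐ[R] B)
    (hφ : Coalgebra.comul ∘ₗ φ.toLinearMap =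
      map φ.toLinearMap φ.toLinearMap ∘ₗ Coalgebra.comul) :
    antipode R ∘ₗ φ.toLinearMap = φ.toLinearMap ∘ₗ antipode R := by
  have hright : toConv φ.toLinearMap * toConv (φ.toLinearMap ∘ₗ antipode R) = 1 := by
    have := LinearMap.algHom_comp_convMul_distrib φ (toConv LinearMap.id) (toConv (antipode R))
    rw [LinearMap.id_mul_antipode, ofConv_toConv, ofConv_toConv, LinearMap.comp_id] at this
    apply WithConv.ofConv_injective
    rw [← this]
    ext
    simp
  have hcomp (f g : WithConv (B →ₗ[R] B)) := LinearMap.convMul_comp_of_comul_comp f g _ hφ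
  set ηεφ := toConv ((1 : WithConv (B →ₗ[R] B)).ofConv ∘ₗ φ.toLinearMap)
  have hleft : toConv (antipode R ∘ₗ φ.toLinearMap) * toConv φ.toLinearMap = ηεφ := by
    have := hcomp (toConv (antipode R)) (toConv LinearMap.id)
    rw [LinearMap.antipode_mul_id] at this
    exact WithConv.ofConv_injective (by simpa using this.symm)
  have hunit : ηεφ * toConv φ.toLinearMap = toConv φ.toLinearMap := by
    have := hcomp 1 (toConv LinearMap.id)
    rw [one_mul] at this
    exact WithConv.ofConv_injective (by simpa using this.symm)
  have hone : ηεφ = 1 := by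
    rw [← mul_one ηεφ, ← hright, ← mul_assoc, hunit, hright]
  exact congrArg ofConv (left_inv_eq_right_inv (hleft.trans hone) hright)

theorem eqOn_tensorSub {B M : Type*} [Ring B] [Algebra ℂ B] [AddCommGroup M] [Module ℂ M]
    {P Q : Submodule ℂ B} {F F' : B ⊗[ℂ] B →ₗ[ℂ] M}
    (h : ∀ x ∈ P, ∀ y ∈ Q, F (x ⊗ₜ y) = F' (x ⊗ₜ y)) {z : B ⊗[ℂ] B}
    (hz : z ∈ tensorSub P Q) : F z = F' z :=
  LinearMap.eqOn_span' (by rintro _ ⟨x, hx, y, hy, rfl⟩; exact h x hx y hy) hz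

theorem eq_of_mem_of_mem_of_iSupIndep {ι R M : Type*} [Ring R] [AddCommGroup M] [Module R M]
    {ℬ : ι → Submodule R M} (hind : iSupIndep ℬ) {p q : ι} {v : M} (hv : v ≠ 0)
    (hp : v ∈ ℬ p) (hq : v ∈ ℬ q) : p = q := by
  by_contra hne
  exact hv (Submodule.disjoint_def.mp (hind.pairwiseDisjoint hne) v hp hq)

section Graded

variable {G B : Type*} [Ring B] [Algebra ℂ B] (ℬ : G → Submodule ℂ B)

def MulOrthogonal : Prop :=
  ∀ p q : G, p ≠ q → ∀ a ∈ ℬ p, ∀ b ∈ ℬ q, a * b = 0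

variable {ℬ}

theorem mul_apply_eq_self_of_sum_eq_one (horth : MulOrthogonal ℬ) {e : G →₀ B}
    (he : ∀ h, e h ∈ ℬ h) (he1 : e.sum (fun _ x => x) = 1) {g : G} {y : B} (hy : y ∈ ℬ g) :
    y * e g = y := by
  conv_rhs => rw [← mul_one y, ← he1, Finsupp.mul_sum]
  exact (Finsupp.sum_eq_single g (fun h _ hne => horth g h hne.symm y hy _ (he h))
    (fun _ => mul_zero y)).symm

theorem mul_one_tmul_apply_of_sum_eq_one [DecidableEq G] (horth : MulOrthogonal ℬ)
    {e : G →₀ B} (he : ∀ h, e h ∈ ℬ h) (he1 : e.sum (fun _ x => x) = 1)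
    {P : Submodule ℂ B} {g h : G} {z : B ⊗[ℂ] B} (hz : z ∈ tensorSub P (ℬ g)) :
    z * (1 ⊗ₜ e h) = if g = h then z else 0 := by
  split_ifs with hgh
  · subst hgh
    refine eqOn_tensorSub (F := LinearMap.mulRight ℂ (1 ⊗ₜ e g)) (F' := LinearMap.id)
      (fun x _ y hy => ?_) hz
    simp [mul_apply_eq_self_of_sum_eq_one horth he he1 hy]
  · refine eqOn_tensorSub (F := LinearMap.mulRight ℂ (1 ⊗ₜ e h)) (F' := 0)
      (fun x _ y hy => ?_) hz
    simp [horth g h hgh y hy _ (he h)]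

end Graded

section Cograded

variable {G B : Type*} [Group G] [Ring B] [HopfAlgebra ℂ B] (ℬ : G → Submodule ℂ B)

def IsCograded₁ : Prop :=
  ∀ p q : G, Submodule.span ℂ {z | ∃ a ∈ ℬ (p * q), ∃ b ∈ ℬ q,
    z = (Coalgebra.comul (R := ℂ) a) * (1 ⊗ₜ[ℂ] b)} = tensorSub (ℬ p) (ℬ q)

def IsCograded₂ : Prop :=
  ∀ p q : G, Submodule.span ℂ {z | ∃ a ∈ ℬ (p * q), ∃ b ∈ ℬ p,
    z = (b ⊗ₜ[ℂ] 1) * (Coalgebra.comul (R := ℂ) a)} = tensorSub (ℬ p) (ℬ q)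

variable {ℬ}

theorem comul_mul_one_tmul_mem_tensorSub (hcograded₁ : IsCograded₁ ℬ) {p q : G} {a b : B}
    (ha : a ∈ ℬ (p * q)) (hb : b ∈ ℬ q) :
    Coalgebra.comul (R := ℂ) a * (1 ⊗ₜ b) ∈ tensorSub (ℬ p) (ℬ q) :=
  hcograded₁ p q ▸ Submodule.subset_span ⟨a, ha, b, hb, rfl⟩

theorem tmul_one_mul_comul_mem_tensorSub (hcograded₂ : IsCograded₂ ℬ) {p q : G} {a b : B}
    (ha : a ∈ ℬ (p * q)) (hb : b ∈ ℬ p) :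
    (b ⊗ₜ 1) * Coalgebra.comul (R := ℂ) a ∈ tensorSub (ℬ p) (ℬ q) :=
  hcograded₂ p q ▸ Submodule.subset_span ⟨a, ha, b, hb, rfl⟩

theorem apply_tmul_mem_of_apply_comul_mul_mem {M : Type*} [AddCommGroup M] [Module ℂ M]
    (hcograded₁ : IsCograded₁ ℬ) {p q : G} (F : B ⊗[ℂ] B →ₗ[ℂ] M) (N : Submodule ℂ M)
    (hF : ∀ a ∈ ℬ (p * q), ∀ b ∈ ℬ q, F (Coalgebra.comul (R := ℂ) a * (1 ⊗ₜ b)) ∈ N)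
    {x y : B} (hx : x ∈ ℬ p) (hy : y ∈ ℬ q) : F (x ⊗ₜ y) ∈ N := by
  have hle : tensorSub (ℬ p) (ℬ q) ≤ N.comap F := by
    rw [← hcograded₁]
    exact Submodule.span_le.mpr (by rintro _ ⟨a, ha, b, hb, rfl⟩; exact hF a ha b hb)
  exact hle (Submodule.subset_span ⟨x, hx, y, hy, rfl⟩)

theorem counit_smul_eq_zero (horth : MulOrthogonal ℬ) (hcograded₁ : IsCograded₁ ℬ)
    {p q : G} (hp : p ≠ 1) {a c : B} (ha : a ∈ ℬ p) (hc : c ∈ ℬ q) :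
    Coalgebra.counit (R := ℂ) a • c = 0 := by
  have := apply_tmul_mem_of_apply_comul_mul_mem hcograded₁
    (LinearMap.mul' ℂ B ∘ₗ map (Algebra.linearMap ℂ B ∘ₗ Coalgebra.counit) LinearMap.id) ⊥
    (fun w hw v hv => ?_) ha hc
  · simpa [Algebra.smul_def] using this
  have hcounit : LinearMap.mul' ℂ B (map (Algebra.linearMap ℂ B ∘ₗ Coalgebra.counit)
      LinearMap.id (Coalgebra.comul w)) = w := by
    have := LinearMap.convMul_apply 1 (toConv (LinearMap.id : B →ₗ[ℂ] B)) w
    rw [one_mul] at this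
    exact this.symm
  rw [Submodule.mem_bot, LinearMap.comp_apply, LinearMap.mul'_map_mul_one_tmul, hcounit]
  exact horth _ _ (by simpa using hp) w hw v hv

theorem antipode_mem (hiSup : iSup ℬ = ⊤) (horth : MulOrthogonal ℬ)
    (hcograded₁ : IsCograded₁ ℬ) {p : G} {a : B} (ha : a ∈ ℬ p) :
    HopfAlgebra.antipode ℂ a ∈ ℬ p⁻¹ := by
  have hmul (q : G) (c : B) (hc : c ∈ ℬ q) : HopfAlgebra.antipode ℂ a * c ∈ ℬ p⁻¹ := by
    refine apply_tmul_mem_of_apply_comul_mul_mem hcograded₁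
      (LinearMap.mul' ℂ B ∘ₗ map (HopfAlgebra.antipode ℂ) LinearMap.id) _
      (fun w hw v hv => ?_) ha hc
    rw [LinearMap.comp_apply, LinearMap.mul'_map_mul_one_tmul, ← LinearMap.rTensor_def,
      HopfAlgebra.mul_antipode_rTensor_comul_apply, ← Algebra.smul_def]
    by_cases hpq : p * q = 1
    · obtain rfl : q = p⁻¹ := eq_inv_of_mul_eq_one_right hpq
      exact Submodule.smul_mem _ _ hv
    · rw [counit_smul_eq_zero horth hcograded₁ hpq hw hv]
      exact Submodule.zero_mem _
  have h1 : (1 : B) ∈ iSup ℬ := hiSup ▸ Submodule.mem_top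
  rw [← mul_one (HopfAlgebra.antipode ℂ a)]
  refine Submodule.iSup_induction ℬ (motive := fun c => HopfAlgebra.antipode ℂ a * c ∈ ℬ p⁻¹)
    h1 hmul (by simp) fun c d hc hd => ?_
  rw [mul_add]
  exact add_mem hc hd

end Cograded

section Action

variable {G B : Type*} [Group G] [Ring B] [HopfAlgebra ℂ B] (ℬ : G → Submodule ℂ B)
  (π : G →* (B ≃ₐ[ℂ] B))

def IsDeformedComul (Δt : B →ₗ[ℂ] B ⊗[ℂ] B) : Prop :=
  ∀ (b : B) (q : G), ∀ b' ∈ ℬ q,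
    Δt b * (1 ⊗ₜ[ℂ] b') = (TensorProduct.map (π q⁻¹).toLinearMap LinearMap.id)
      (Coalgebra.comul (R := ℂ) b * (1 ⊗ₜ[ℂ] b'))

def IsDeformedAntipode (St : B →ₗ[ℂ] B) : Prop :=
  ∀ p : G, ∀ b ∈ ℬ p, St b = π p⁻¹ (HopfAlgebra.antipode ℂ b)

variable {ℬ π} {ρ : G → G → G}

theorem label_eq_of_action_eq (hind : iSupIndep ℬ)
    (hπℬ : ∀ p q : G, (ℬ q).map (π p).toLinearMap = ℬ (ρ p q)) {g g' q : G} (hπ : π g = π g')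
    {b : B} (hb : b ∈ ℬ q) (hb0 : b ≠ 0) : ρ g q = ρ g' q :=
  eq_of_mem_of_mem_of_iSupIndep hind (v := π g b) (by simpa using hb0)
    (hπℬ g q ▸ Submodule.mem_map_of_mem hb) (hπℬ g' q ▸ hπ ▸ Submodule.mem_map_of_mem hb)

theorem deformedAntipode_action_apply
    (hSπ : ∀ (g : G) (x : B), HopfAlgebra.antipode ℂ (π g x) = π g (HopfAlgebra.antipode ℂ x))
    (hπℬ : ∀ p q : G, (ℬ q).map (π p).toLinearMap = ℬ (ρ p q))
    (hπρ : ∀ p q : G, π (ρ p q) = π (p * q * p⁻¹))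
    {St : B →ₗ[ℂ] B} (hSt : IsDeformedAntipode ℬ π St)
    {g r : G} {x : B} (hx : x ∈ ℬ r) :
    St (π g x) = π (g * r⁻¹) (HopfAlgebra.antipode ℂ x) := by
  rw [hSt _ _ (hπℬ g r ▸ Submodule.mem_map_of_mem hx), hSπ, ← AlgEquiv.mul_apply, map_inv,
    hπρ, ← map_inv, ← map_mul]
  congr 2
  group

theorem mul'_map_deformedAntipode_id_deformedComul (hiSup : iSup ℬ = ⊤)
    (horth : MulOrthogonal ℬ) (hcograded₁ : IsCograded₁ ℬ)
    (hSπ : ∀ (g : G) (x : B), HopfAlgebra.antipode ℂ (π g x) = π g (HopfAlgebra.antipode ℂ x))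
    (hπℬ : ∀ p q : G, (ℬ q).map (π p).toLinearMap = ℬ (ρ p q))
    (hπρ : ∀ p q : G, π (ρ p q) = π (p * q * p⁻¹))
    {Δt : B →ₗ[ℂ] B ⊗[ℂ] B} (hΔt : IsDeformedComul ℬ π Δt)
    {St : B →ₗ[ℂ] B} (hSt : IsDeformedAntipode ℬ π St)
    {p q : G} {b b' : B} (hb : b ∈ ℬ p) (hb' : b' ∈ ℬ q) :
    LinearMap.mul' ℂ B (map St LinearMap.id (Δt b * (1 ⊗ₜ b'))) =
      Coalgebra.counit (R := ℂ) b • b' := by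
  have hz : Coalgebra.comul (R := ℂ) b * (1 ⊗ₜ b') ∈ tensorSub (ℬ (p * q⁻¹)) (ℬ q) :=
    comul_mul_one_tmul_mem_tensorSub hcograded₁ (by simpa using hb) hb'
  rw [hΔt b q b' hb']
  refine (eqOn_tensorSub (F := LinearMap.mul' ℂ B ∘ₗ map St LinearMap.id ∘ₗ
      map (π q⁻¹).toLinearMap LinearMap.id)
    (F' := LinearMap.mul' ℂ B ∘ₗ map ((π p⁻¹).toLinearMap ∘ₗ HopfAlgebra.antipode ℂ)
      LinearMap.id) (fun x hx y _ => ?_) hz).trans ?_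
  · simp only [LinearMap.comp_apply, map_tmul, LinearMap.id_apply, LinearMap.mul'_apply,
      AlgEquiv.toLinearMap_apply, deformedAntipode_action_apply hSπ hπℬ hπρ hSt hx]
    rw [show q⁻¹ * (p * q⁻¹)⁻¹ = p⁻¹ by group]
  by_cases hπp : π p = 1
  · have hid : (π p⁻¹).toLinearMap = LinearMap.id := by
      rw [map_inv, hπp, inv_one]
      rfl
    rw [hid, LinearMap.id_comp, LinearMap.comp_apply, LinearMap.mul'_map_mul_one_tmul,
      ← LinearMap.rTensor_def, HopfAlgebra.mul_antipode_rTensor_comul_apply, Algebra.smul_def]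
  · have hp : p ≠ 1 := by rintro rfl; simp at hπp
    rw [counit_smul_eq_zero horth hcograded₁ hp hb hb']
    refine eqOn_tensorSub (F' := 0) (fun x hx y hy => ?_) hz
    have hSx : π p⁻¹ (HopfAlgebra.antipode ℂ x) ∈ ℬ (ρ p⁻¹ (p * q⁻¹)⁻¹) :=
      hπℬ _ _ ▸ Submodule.mem_map_of_mem (antipode_mem hiSup horth hcograded₁ hx)
    have hne : ρ p⁻¹ (p * q⁻¹)⁻¹ ≠ q := fun heq => hπp <| by
      have h := hπρ p⁻¹ (p * q⁻¹)⁻¹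
      rw [heq, show p⁻¹ * (p * q⁻¹)⁻¹ * p⁻¹⁻¹ = p⁻¹ * q by group, map_mul] at h
      simpa using h
    simpa using horth _ _ hne _ hSx y hy

theorem action_index_unique (hind : iSupIndep ℬ)
    (hπℬ : ∀ p q : G, (ℬ q).map (π p).toLinearMap = ℬ (ρ p q))
    (hπρ : ∀ p q : G, π (ρ p q) = π (p * q * p⁻¹)) {p q h h' : G} {b' : B} (hb' : b' ∈ ℬ q)
    (hb'0 : b' ≠ 0) (hh : (ρ h q)⁻¹ * p = h) (hh' : (ρ h' q)⁻¹ * p = h') : h = h' := by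
  have hπp {g : G} (hg : (ρ g q)⁻¹ * p = g) : π p = π g * π q := by
    rw [inv_mul_eq_iff_eq_mul.mp hg, map_mul, hπρ]
    simp
  have hπ : π h = π h' := mul_right_cancel ((hπp hh).symm.trans (hπp hh'))
  rw [← hh, ← hh', label_eq_of_action_eq hind hπℬ hπ hb' hb'0]

theorem exists_action_index (hind : iSupIndep ℬ) (horth : MulOrthogonal ℬ)
    (hcograded₂ : IsCograded₂ ℬ)
    (hSℬ : ∀ (p : G), ∀ a ∈ ℬ p, HopfAlgebra.antipode ℂ a ∈ ℬ p⁻¹)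
    (hSπ : ∀ (g : G) (x : B), HopfAlgebra.antipode ℂ (π g x) = π g (HopfAlgebra.antipode ℂ x))
    (hπℬ : ∀ p q : G, (ℬ q).map (π p).toLinearMap = ℬ (ρ p q))
    (hπρ : ∀ p q : G, π (ρ p q) = π (p * q * p⁻¹))
    {e : G →₀ B} (he : ∀ h, e h ∈ ℬ h) (he1 : e.sum (fun _ x => x) = 1)
    {q : G} {b b' : B} (hb : b ∈ ℬ 1) (hb' : b' ∈ ℬ q)
    (hne : Coalgebra.counit (R := ℂ) b • b' ≠ 0) : ∃ h ∈ e.support, (ρ h q)⁻¹ = h := by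
  -- otherwise `m ∘ (ι ⊗ S)` would kill `(b' ⊗ 1) Δ(b) ∈ B_q ⊗ B_{q⁻¹}`, which it maps to `ε(b) b'`
  obtain ⟨a, ha, hSa⟩ : ∃ a ∈ ℬ q⁻¹, HopfAlgebra.antipode ℂ a ≠ 0 := by
    by_contra! hS
    refine hne ?_
    have hz := tmul_one_mul_comul_mem_tensorSub hcograded₂ (p := q) (q := q⁻¹)
      (by simpa using hb) hb'
    have := eqOn_tensorSub (F := LinearMap.mul' ℂ B ∘ₗ map LinearMap.id (HopfAlgebra.antipode ℂ))
      (F' := 0) (fun x _ y hy => by simp [hS y hy]) hz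
    rwa [LinearMap.comp_apply, LinearMap.mul'_map_tmul_one_mul, ← LinearMap.lTensor_def,
      HopfAlgebra.mul_antipode_lTensor_comul_apply, ← Algebra.commutes, ← Algebra.smul_def]
      at this
  set k := ρ q⁻¹ q⁻¹
  have hπk : π k = π q⁻¹ := by rw [hπρ]; group
  have hak : π q⁻¹ a ∈ ℬ k := hπℬ _ _ ▸ Submodule.mem_map_of_mem ha
  have hak0 : π q⁻¹ a ≠ 0 := by
    rintro h0
    exact hSa (by simp [(map_eq_zero_iff _ (π q⁻¹).injective).mp h0])
  have hρk : ρ q⁻¹ q = k⁻¹ := by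
    refine eq_of_mem_of_mem_of_iSupIndep hind (v := π q⁻¹ (HopfAlgebra.antipode ℂ a))
      (by simpa using hSa) ?_ (hSπ q⁻¹ a ▸ hSℬ k _ hak)
    exact hπℬ _ _ ▸ Submodule.mem_map_of_mem (by simpa using hSℬ _ a ha)
  refine ⟨k, Finsupp.mem_support_iff.mpr fun h0 => hak0 ?_, ?_⟩
  · rw [← mul_apply_eq_self_of_sum_eq_one horth he he1 hak, h0, mul_zero]
  · have hb'0 : b' ≠ 0 := by rintro rfl; simp at hne
    rw [label_eq_of_action_eq hind hπℬ hπk hb' hb'0, hρk, inv_inv]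

theorem mul'_map_id_deformedAntipode_summand [DecidableEq G]
    (horth : MulOrthogonal ℬ) (hcograded₂ : IsCograded₂ ℬ)
    (hπℬ : ∀ p q : G, (ℬ q).map (π p).toLinearMap = ℬ (ρ p q))
    {Δt : B →ₗ[ℂ] B ⊗[ℂ] B} (hΔt : IsDeformedComul ℬ π Δt)
    {St : B →ₗ[ℂ] B} (hSt : IsDeformedAntipode ℬ π St)
    {e : G →₀ B} (he : ∀ h, e h ∈ ℬ h) (he1 : e.sum (fun _ x => x) = 1)
    {p q : G} {b b' : B} (hb : b ∈ ℬ p) (hb' : b' ∈ ℬ q) (h : G) :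
    LinearMap.mul' ℂ B (map LinearMap.id St ((b' ⊗ₜ 1) * (Δt b * (1 ⊗ₜ e h)))) =
      if (ρ h q)⁻¹ * p = h then Coalgebra.counit (R := ℂ) b • b' else 0 := by
  have hw : (π h b' ⊗ₜ 1) * Coalgebra.comul (R := ℂ) b ∈
      tensorSub (ℬ (ρ h q)) (ℬ ((ρ h q)⁻¹ * p)) :=
    tmul_one_mul_comul_mem_tensorSub hcograded₂ (by simpa using hb)
      (hπℬ h q ▸ Submodule.mem_map_of_mem hb')
  have hb'h : π h⁻¹ (π h b') = b' := by simp
  rw [hΔt b h _ (he h), ← hb'h, AlgEquiv.tmul_one_mul_map_id, ← mul_assoc,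
    mul_one_tmul_apply_of_sum_eq_one horth he he1 hw]
  split_ifs with hh
  · rw [hh] at hw
    refine (eqOn_tensorSub (F := LinearMap.mul' ℂ B ∘ₗ map LinearMap.id St ∘ₗ
        map (π h⁻¹).toLinearMap LinearMap.id)
      (F' := (π h⁻¹).toLinearMap ∘ₗ LinearMap.mul' ℂ B ∘ₗ
        map LinearMap.id (HopfAlgebra.antipode ℂ)) (fun x _ y hy => ?_) hw).trans ?_
    · simp only [LinearMap.comp_apply, map_tmul, LinearMap.id_apply, LinearMap.mul'_apply,
        AlgEquiv.toLinearMap_apply, hSt h y hy, map_mul]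
    rw [LinearMap.comp_apply, LinearMap.comp_apply, LinearMap.mul'_map_tmul_one_mul,
      ← LinearMap.lTensor_def, HopfAlgebra.mul_antipode_lTensor_comul_apply,
      AlgEquiv.toLinearMap_apply, map_mul, AlgEquiv.commutes, hb'h, ← Algebra.commutes,
      ← Algebra.smul_def]
  · simp

theorem mul'_map_id_deformedAntipode_deformedComul (hiSup : iSup ℬ = ⊤)
    (hind : iSupIndep ℬ) (horth : MulOrthogonal ℬ) (hcograded₁ : IsCograded₁ ℬ)
    (hcograded₂ : IsCograded₂ ℬ)
    (hSπ : ∀ (g : G) (x : B), HopfAlgebra.antipode ℂ (π g x) = π g (HopfAlgebra.antipode ℂ x))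
    (hπℬ : ∀ p q : G, (ℬ q).map (π p).toLinearMap = ℬ (ρ p q))
    (hπρ : ∀ p q : G, π (ρ p q) = π (p * q * p⁻¹))
    {Δt : B →ₗ[ℂ] B ⊗[ℂ] B} (hΔt : IsDeformedComul ℬ π Δt)
    {St : B →ₗ[ℂ] B} (hSt : IsDeformedAntipode ℬ π St)
    {p q : G} {b b' : B} (hb : b ∈ ℬ p) (hb' : b' ∈ ℬ q) :
    LinearMap.mul' ℂ B (map LinearMap.id St ((b' ⊗ₜ 1) * Δt b)) =
      Coalgebra.counit (R := ℂ) b • b' := by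
  classical
  obtain ⟨e, he, he1⟩ := (Submodule.mem_iSup_iff_exists_finsupp ℬ 1).mp (hiSup ▸ Submodule.mem_top)
  have hsplit : (b' ⊗ₜ 1) * Δt b = ∑ h ∈ e.support, (b' ⊗ₜ 1) * (Δt b * (1 ⊗ₜ e h)) := by
    have h1 : ∑ h ∈ e.support, (1 : B) ⊗ₜ[ℂ] e h = 1 := by
      rw [← tmul_sum, show ∑ h ∈ e.support, e h = 1 from he1]
      rfl
    rw [← Finset.mul_sum, ← Finset.mul_sum, h1, mul_one]
  simp only [hsplit, map_sum, mul'_map_id_deformedAntipode_summand horth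
    hcograded₂ hπℬ hΔt hSt he he1 hb hb']
  by_cases hc : Coalgebra.counit (R := ℂ) b • b' = 0
  · simp [hc]
  obtain rfl : p = 1 := by
    by_contra hp
    exact hc (counit_smul_eq_zero horth hcograded₁ hp hb hb')
  have hb'0 : b' ≠ 0 := by rintro rfl; simp at hc
  obtain ⟨h₀, hh₀, hk⟩ := exists_action_index hind horth hcograded₂
    (fun _ _ => antipode_mem hiSup horth hcograded₁) hSπ hπℬ hπρ he he1 hb hb' hc
  have hk₁ : (ρ h₀ q)⁻¹ * 1 = h₀ := by rwa [mul_one]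
  rw [Finset.sum_eq_single_of_mem h₀ hh₀ fun h _ hne =>
    if_neg fun hh => hne (action_index_unique hind hπℬ hπρ hb' hb'0 hh hk₁)]
  exact if_pos hk₁

end Action

/-- `S̃(b) = π_{p⁻¹}(S(b))` (for `b ∈ B_p`) is an antipode for
the deformed comultiplication: `m((S̃ ⊗ ι)(Δ̃(b)(1 ⊗ b'))) = ε(b)b'` and
`m((ι ⊗ S̃)((b' ⊗ 1)Δ̃(b))) = ε(b)b'` for `b ∈ B_p`, `b' ∈ B_q`. -/
theorem deformed_comultiplication_antipode
    {G : Type*} [Group G] [DecidableEq G] {B : Type*} [Ring B] [HopfAlgebra ℂ B]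
    (ℬ : G → Submodule ℂ B)
    (hdec : DirectSum.IsInternal ℬ)
    (horth : ∀ p q : G, p ≠ q → ∀ a ∈ ℬ p, ∀ b ∈ ℬ q, a * b = 0)
    (hcograded₁ : ∀ p q : G,
      Submodule.span ℂ {z | ∃ a ∈ ℬ (p * q), ∃ b ∈ ℬ q,
        z = (Coalgebra.comul (R := ℂ) a) * (1 ⊗ₜ[ℂ] b)} = tensorSub (ℬ p) (ℬ q))
    (hcograded₂ : ∀ p q : G,
      Submodule.span ℂ {z | ∃ a ∈ ℬ (p * q), ∃ b ∈ ℬ p,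
        z = (b ⊗ₜ[ℂ] 1) * (Coalgebra.comul (R := ℂ) a)} = tensorSub (ℬ p) (ℬ q))
    -- the admissible action
    (π : G →* (B ≃ₐ[ℂ] B)) (ρ : G → G → G)
    (hπΔ : ∀ (p : G) (b : B), Coalgebra.comul (R := ℂ) (π p b) =
      (TensorProduct.map (π p).toLinearMap (π p).toLinearMap) (Coalgebra.comul (R := ℂ) b))
    (hπℬ : ∀ p q : G, (ℬ q).map (π p).toLinearMap = ℬ (ρ p q))
    (hπρ : ∀ p q : G, π (ρ p q) = π (p * q * p⁻¹))
    -- the deformed comultiplication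
    (Δt : B →ₗ[ℂ] B ⊗[ℂ] B)
    (hΔt : ∀ (b : B) (q : G), ∀ b' ∈ ℬ q,
      Δt b * (1 ⊗ₜ[ℂ] b') = (TensorProduct.map (π q⁻¹).toLinearMap LinearMap.id)
        (Coalgebra.comul (R := ℂ) b * (1 ⊗ₜ[ℂ] b')))
    (St : B →ₗ[ℂ] B)
    (hSt : ∀ p : G, ∀ b ∈ ℬ p, St b = π p⁻¹ (HopfAlgebra.antipode (R := ℂ) b)) :
    ∀ p q : G, ∀ b ∈ ℬ p, ∀ b' ∈ ℬ q,
      (LinearMap.mul' ℂ B) ((TensorProduct.map St LinearMap.id)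
        (Δt b * (1 ⊗ₜ[ℂ] b'))) = Coalgebra.counit (R := ℂ) b • b' ∧
      (LinearMap.mul' ℂ B) ((TensorProduct.map LinearMap.id St)
        ((b' ⊗ₜ[ℂ] (1 : B)) * Δt b)) = Coalgebra.counit (R := ℂ) b • b' := by
  have hSπ (g : G) (x : B) :
      HopfAlgebra.antipode ℂ (π g x) = π g (HopfAlgebra.antipode ℂ x) :=
    LinearMap.congr_fun (HopfAlgebra.antipode_comp_algHom (π g : B →ₐ[ℂ] B)
      (LinearMap.ext (hπΔ g))) x
  intro p q b hb b' hb'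
  exact ⟨mul'_map_deformedAntipode_id_deformedComul hdec.submodule_iSup_eq_top horth
      hcograded₁ hSπ hπℬ hπρ hΔt hSt hb hb',
    mul'_map_id_deformedAntipode_deformedComul hdec.submodule_iSup_eq_top
      hdec.submodule_iSupIndep horth hcograded₁ hcograded₂ hSπ hπℬ hπρ hΔt hSt hb hb'⟩
end

section
/- Let B be a G-cograded Hopf algebra with right integral ψ and admissible action π. Define ψ̃(b) = ψ(π_{p⁻¹}(b)) for b ∈ B_p. Then ψ̃ is a right integral on (B, Δ̃): (ψ̃ ⊗ ι)Δ̃(b) = ψ̃(b)·1 for all b ∈ B. -/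
/-!
For homogeneous `b ∈ B_r` and `x ∈ B_q` we have `Δ̃(b)(1 ⊗ x) = (π_{q⁻¹} ⊗ ι)(Δ(b)(1 ⊗ x))`, and
`Δ(b)(1 ⊗ x)` lies in `B_{rq⁻¹} ⊗ B_q`. On `B_{rq⁻¹}` the admissibility of `π` gives
`ψ̃ ∘ π_{q⁻¹} = ψ ∘ π_{r⁻¹}`, and `ψ ∘ π_{r⁻¹}` is again a right integral for `Δ` because `π_{r⁻¹}`
is a coalgebra automorphism. Hence `((ψ̃ ⊗ ι)Δ̃(b)) x = ψ̃(b) x`; taking `x = 1`, which is a sum of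
homogeneous elements, and summing over the homogeneous components of `b` gives the claim.
-/

open TensorProduct

open TensorProduct (lid)

theorem LinearMap.ext_of_iSup_eq_top {R M N ι : Type*} [Semiring R] [AddCommMonoid M]
    [AddCommMonoid N] [Module R M] [Module R N] {p : ι → Submodule R M}
    (hp : ⨆ i, p i = ⊤) {f g : M →ₗ[R] N} (h : ∀ i, ∀ x ∈ p i, f x = g x) : f = g :=
  LinearMap.ext fun x ↦ Submodule.iSup_induction p (motive := fun x ↦ f x = g x)
    (hp ▸ Submodule.mem_top) h (by simp) fun x y hx hy ↦ by simp [hx, hy]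

theorem TensorProduct.map_eq_of_eqOn_tensorSub {B M : Type*} [Ring B] [Algebra ℂ B]
    [AddCommMonoid M] [Module ℂ M] {P Q : Submodule ℂ B} {f f' : B →ₗ[ℂ] M}
    (h : ∀ u ∈ P, f u = f' u) {z : B ⊗[ℂ] B} (hz : z ∈ tensorSub P Q) :
    map f LinearMap.id z = map f' LinearMap.id z := by
  induction hz using Submodule.span_induction with
  | mem z hz =>
    obtain ⟨u, hu, v, -, rfl⟩ := hz
    simp [h u hu]
  | zero => simp
  | add z w _ _ hz hw => simp only [map_add, hz, hw]
  | smul c z _ hz => simp only [map_smul, hz]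

section RightIntegral

variable {R A : Type*} [CommSemiring R] [Semiring A] [Algebra R A]

def IsRightIntegral (Δ : A →ₗ[R] A ⊗[R] A) (φ : A →ₗ[R] R) : Prop :=
  ∀ a, lid R A (map φ LinearMap.id (Δ a)) = φ a • (1 : A)

theorem lid_map_mul_one_tmul (φ : A →ₗ[R] R) (z : A ⊗[R] A) (x : A) :
    lid R A (map φ LinearMap.id (z * (1 ⊗ₜ[R] x))) = lid R A (map φ LinearMap.id z) * x := by
  induction z using TensorProduct.induction_on with
  | zero => simp
  | tmul u v => simp [Algebra.TensorProduct.tmul_mul_tmul]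
  | add z w hz hw => simp [add_mul, hz, hw]

theorem lid_map_comp_algEquiv (φ : A →ₗ[R] R) (g : A ≃ₐ[R] A) (w : A ⊗[R] A) :
    lid R A (map (φ ∘ₗ g.toLinearMap) LinearMap.id w)
      = g.symm (lid R A (map φ LinearMap.id (map g.toLinearMap g.toLinearMap w))) := by
  induction w using TensorProduct.induction_on with
  | zero => simp
  | tmul u v => simp
  | add z w hz hw => simp [hz, hw]

theorem IsRightIntegral.comp_algEquiv {Δ : A →ₗ[R] A ⊗[R] A} {φ : A →ₗ[R] R}
    (hφ : IsRightIntegral Δ φ) (g : A ≃ₐ[R] A)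
    (hg : ∀ a, Δ (g a) = map g.toLinearMap g.toLinearMap (Δ a)) :
    IsRightIntegral Δ (φ ∘ₗ g.toLinearMap) := fun a ↦ by
  rw [lid_map_comp_algEquiv, ← hg, hφ]
  simp

end RightIntegral

theorem twisted_apply_action_of_mem {G B : Type*} [Group G] [Semiring B] [Algebra ℂ B]
    (ℬ : G → Submodule ℂ B) (π : G →* (B ≃ₐ[ℂ] B))
    (ρ : G → G → G) (hπℬ : ∀ p q : G, (ℬ q).map (π p).toLinearMap = ℬ (ρ p q))
    (hπρ : ∀ p q : G, π (ρ p q) = π (p * q * p⁻¹)) (ψ ψt : B →ₗ[ℂ] ℂ)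
    (hψt : ∀ p : G, ∀ b ∈ ℬ p, ψt b = ψ (π p⁻¹ b)) {p : G} {u : B} (hu : u ∈ ℬ p) (s : G) :
    ψt (π s u) = ψ (π (s * p⁻¹) u) := by
  have hsu : π s u ∈ ℬ (ρ s p) := hπℬ s p ▸ ⟨u, hu, rfl⟩
  rw [hψt _ _ hsu, map_inv, hπρ, ← map_inv, ← AlgEquiv.mul_apply, ← map_mul]
  congr 3
  group

theorem deformed_integral_mul_of_mem {G B : Type*} [Group G] [Ring B] [Bialgebra ℂ B]
    (ℬ : G → Submodule ℂ B)
    (hcograded₁ : ∀ p q : G,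
      Submodule.span ℂ {z | ∃ a ∈ ℬ (p * q), ∃ b ∈ ℬ q,
        z = (Coalgebra.comul (R := ℂ) a) * (1 ⊗ₜ[ℂ] b)} = tensorSub (ℬ p) (ℬ q))
    (π : G →* (B ≃ₐ[ℂ] B)) (ρ : G → G → G)
    (hπΔ : ∀ (p : G) (b : B), Coalgebra.comul (R := ℂ) (π p b) =
      (TensorProduct.map (π p).toLinearMap (π p).toLinearMap) (Coalgebra.comul (R := ℂ) b))
    (hπℬ : ∀ p q : G, (ℬ q).map (π p).toLinearMap = ℬ (ρ p q))
    (hπρ : ∀ p q : G, π (ρ p q) = π (p * q * p⁻¹))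
    (Δt : B →ₗ[ℂ] B ⊗[ℂ] B)
    (hΔt : ∀ (b : B) (q : G), ∀ b' ∈ ℬ q,
      Δt b * (1 ⊗ₜ[ℂ] b') = (TensorProduct.map (π q⁻¹).toLinearMap LinearMap.id)
        (Coalgebra.comul (R := ℂ) b * (1 ⊗ₜ[ℂ] b')))
    (ψ ψt : B →ₗ[ℂ] ℂ) (hψ : IsRightIntegral (Coalgebra.comul (R := ℂ)) ψ)
    (hψt : ∀ p : G, ∀ b ∈ ℬ p, ψt b = ψ (π p⁻¹ b))
    {r q : G} {b x : B} (hb : b ∈ ℬ r) (hx : x ∈ ℬ q) :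
    lid ℂ B (map ψt LinearMap.id (Δt b)) * x = ψt b • x := by
  set w := Coalgebra.comul (R := ℂ) b * (1 ⊗ₜ[ℂ] x)
  have hw : w ∈ tensorSub (ℬ (r * q⁻¹)) (ℬ q) :=
    hcograded₁ (r * q⁻¹) q ▸ Submodule.subset_span ⟨b, by simpa using hb, x, hx, rfl⟩
  have hψtπ : ∀ u ∈ ℬ (r * q⁻¹), (ψt ∘ₗ (π q⁻¹).toLinearMap) u = (ψ ∘ₗ (π r⁻¹).toLinearMap) u :=
    fun u hu ↦ by
      simp only [LinearMap.comp_apply, AlgEquiv.toLinearMap_apply,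
        twisted_apply_action_of_mem ℬ π ρ hπℬ hπρ ψ ψt hψt hu, mul_inv_rev, inv_inv,
        inv_mul_cancel_left]
  calc lid ℂ B (map ψt LinearMap.id (Δt b)) * x
      = lid ℂ B (map ψt LinearMap.id (map (π q⁻¹).toLinearMap LinearMap.id w)) := by
        rw [← lid_map_mul_one_tmul, hΔt b q x hx]
    _ = lid ℂ B (map (ψ ∘ₗ (π r⁻¹).toLinearMap) LinearMap.id w) := by
        rw [← LinearMap.comp_apply (map _ _), ← map_comp, LinearMap.id_comp,
          map_eq_of_eqOn_tensorSub hψtπ hw]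
    _ = ψt b • x := by
        rw [lid_map_mul_one_tmul, hψ.comp_algEquiv (π r⁻¹) (hπΔ r⁻¹) b, hψt r b hb,
          LinearMap.comp_apply, AlgEquiv.toLinearMap_apply,
          smul_mul_assoc, one_mul]

theorem deformed_comultiplication_right_integral_general
    {G : Type*} [Group G] [DecidableEq G] {B : Type*} [Ring B] [HopfAlgebra ℂ B]
    (ℬ : G → Submodule ℂ B)
    (hdec : DirectSum.IsInternal ℬ)
    (hcograded₁ : ∀ p q : G,
      Submodule.span ℂ {z | ∃ a ∈ ℬ (p * q), ∃ b ∈ ℬ q,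
        z = (Coalgebra.comul (R := ℂ) a) * (1 ⊗ₜ[ℂ] b)} = tensorSub (ℬ p) (ℬ q))
    -- the admissible action
    (π : G →* (B ≃ₐ[ℂ] B)) (ρ : G → G → G)
    (hπΔ : ∀ (p : G) (b : B), Coalgebra.comul (R := ℂ) (π p b) =
      (TensorProduct.map (π p).toLinearMap (π p).toLinearMap) (Coalgebra.comul (R := ℂ) b))
    (hπℬ : ∀ p q : G, (ℬ q).map (π p).toLinearMap = ℬ (ρ p q))
    (hπρ : ∀ p q : G, π (ρ p q) = π (p * q * p⁻¹))
    -- the deformed comultiplication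
    (Δt : B →ₗ[ℂ] B ⊗[ℂ] B)
    (hΔt : ∀ (b : B) (q : G), ∀ b' ∈ ℬ q,
      Δt b * (1 ⊗ₜ[ℂ] b') = (TensorProduct.map (π q⁻¹).toLinearMap LinearMap.id)
        (Coalgebra.comul (R := ℂ) b * (1 ⊗ₜ[ℂ] b')))
    (ψ ψt : B →ₗ[ℂ] ℂ)
    (hψ : ∀ b : B, (TensorProduct.lid ℂ B) ((TensorProduct.map ψ LinearMap.id)
      (Coalgebra.comul (R := ℂ) b)) = ψ b • (1 : B))
    (hψt : ∀ p : G, ∀ b ∈ ℬ p, ψt b = ψ (π p⁻¹ b)) :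
    ∀ b : B, (TensorProduct.lid ℂ B) ((TensorProduct.map ψt LinearMap.id) (Δt b))
      = ψt b • (1 : B) := by
  have htop := hdec.submodule_iSup_eq_top
  have hhom : ∀ r, ∀ b ∈ ℬ r,
      lid ℂ B (map ψt LinearMap.id (Δt b)) = ψt b • (1 : B) := fun r b hb ↦ by
    have hmul : LinearMap.mulLeft ℂ (lid ℂ B (map ψt LinearMap.id (Δt b)))
        = ψt b • LinearMap.id :=
      LinearMap.ext_of_iSup_eq_top htop fun q x hx ↦ by
        simpa using deformed_integral_mul_of_mem ℬ hcograded₁ π ρ hπΔ hπℬ hπρ Δt hΔt ψ ψt hψ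
          hψt hb hx
    simpa using LinearMap.congr_fun hmul 1
  exact LinearMap.congr_fun (LinearMap.ext_of_iSup_eq_top htop
    (f := (lid ℂ B).toLinearMap ∘ₗ map ψt LinearMap.id ∘ₗ Δt)
    (g := ψt.smulRight 1) hhom)

/-- if `ψ` is a right integral on `B` and `ψ̃(b) = ψ(π_{p⁻¹}(b))`
for `b ∈ B_p`, then `ψ̃` is a right integral on `(B, Δ̃)`:
`(ψ̃ ⊗ ι)Δ̃(b) = ψ̃(b)·1` for all `b ∈ B`. -/
theorem deformed_comultiplication_right_integral
    {G : Type*} [Group G] [DecidableEq G] {B : Type*} [Ring B] [HopfAlgebra ℂ B]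
    (ℬ : G → Submodule ℂ B)
    (hdec : DirectSum.IsInternal ℬ)
    (horth : ∀ p q : G, p ≠ q → ∀ a ∈ ℬ p, ∀ b ∈ ℬ q, a * b = 0)
    (hcograded₁ : ∀ p q : G,
      Submodule.span ℂ {z | ∃ a ∈ ℬ (p * q), ∃ b ∈ ℬ q,
        z = (Coalgebra.comul (R := ℂ) a) * (1 ⊗ₜ[ℂ] b)} = tensorSub (ℬ p) (ℬ q))
    (hcograded₂ : ∀ p q : G,
      Submodule.span ℂ {z | ∃ a ∈ ℬ (p * q), ∃ b ∈ ℬ p,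
        z = (b ⊗ₜ[ℂ] 1) * (Coalgebra.comul (R := ℂ) a)} = tensorSub (ℬ p) (ℬ q))
    -- the admissible action
    (π : G →* (B ≃ₐ[ℂ] B)) (ρ : G → G → G)
    (hπΔ : ∀ (p : G) (b : B), Coalgebra.comul (R := ℂ) (π p b) =
      (TensorProduct.map (π p).toLinearMap (π p).toLinearMap) (Coalgebra.comul (R := ℂ) b))
    (hπℬ : ∀ p q : G, (ℬ q).map (π p).toLinearMap = ℬ (ρ p q))
    (hπρ : ∀ p q : G, π (ρ p q) = π (p * q * p⁻¹))
    -- the deformed comultiplication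
    (Δt : B →ₗ[ℂ] B ⊗[ℂ] B)
    (hΔt : ∀ (b : B) (q : G), ∀ b' ∈ ℬ q,
      Δt b * (1 ⊗ₜ[ℂ] b') = (TensorProduct.map (π q⁻¹).toLinearMap LinearMap.id)
        (Coalgebra.comul (R := ℂ) b * (1 ⊗ₜ[ℂ] b')))
    (ψ ψt : B →ₗ[ℂ] ℂ)
    (hψ : ∀ b : B, (TensorProduct.lid ℂ B) ((TensorProduct.map ψ LinearMap.id)
      (Coalgebra.comul (R := ℂ) b)) = ψ b • (1 : B))
    (hψt : ∀ p : G, ∀ b ∈ ℬ p, ψt b = ψ (π p⁻¹ b)) :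
    ∀ b : B, (TensorProduct.lid ℂ B) ((TensorProduct.map ψt LinearMap.id) (Δt b))
      = ψt b • (1 : B) :=
  deformed_comultiplication_right_integral_general ℬ hdec hcograded₁ π ρ hπΔ hπℬ hπρ Δt hΔt ψ ψt hψ
    hψt
end

section
/- Let π be a crossing of G on the G-cograded Hopf algebra B. Then each π_p also respects the deformed comultiplication: Δ̃(π_p(b)) = (π_p ⊗ π_p)(Δ̃(b)) for all b ∈ B, so π is again a crossing of G on B̃ = (B, Δ̃). Moreover the double deformation recovers the original structure: applying the deformation construction to (B̃, π) gives back Δ, i.e., Δ̃̃ = Δ. -/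
open TensorProduct

/-!
An element `z` of `B ⊗ B` is determined by the products `z (1 ⊗ b')` with `b'` homogeneous,
since `1` is a finite sum of homogeneous elements.
Against such a `b' ∈ B_q` the deformation is just the twist `π_{q⁻¹} ⊗ ι`. For equivariance,
`(π_p ⊗ π_p)(Δ̃ b)(1 ⊗ b') = (π_p ⊗ π_p)(Δ̃ b (1 ⊗ π_{p⁻¹} b'))` with `π_{p⁻¹} b' ∈ B_{p⁻¹qp}`,
and both sides become `(π_{q⁻¹p} ⊗ π_p)(Δ b (1 ⊗ π_{p⁻¹} b'))`. For the double deformation,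
`b' ∈ B_q = B̃_{q⁻¹}` is twisted first by `π_{q⁻¹}` and then by `π_q`, which cancel.
-/

namespace TensorProduct

variable {R A : Type*} [CommSemiring R] [Semiring A] [Algebra R A]

theorem eq_of_forall_mul_one_tmul_eq {ι : Type*} {ℬ : ι → Submodule R A} (hℬ : ⨆ i, ℬ i = ⊤)
    {z z' : A ⊗[R] A} (h : ∀ i, ∀ b ∈ ℬ i, z * (1 ⊗ₜ[R] b) = z' * (1 ⊗ₜ[R] b)) : z = z' := by
  let mulOneTmul (w : A ⊗[R] A) : A →ₗ[R] A ⊗[R] A :=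
    LinearMap.mulLeft R w ∘ₗ TensorProduct.mk R A A 1
  have hle : ⨆ i, ℬ i ≤ LinearMap.eqLocus (mulOneTmul z) (mulOneTmul z') :=
    iSup_le fun i b hb => h i b hb
  have h1 := (hℬ ▸ hle) (Submodule.mem_top (x := (1 : A)))
  simpa [mulOneTmul, ← Algebra.TensorProduct.one_def] using h1

theorem map_algEquiv_mul {B C D : Type*} [Semiring B] [Algebra R B] [Semiring C] [Algebra R C]
    [Semiring D] [Algebra R D] (e : A ≃ₐ[R] B) (f : C ≃ₐ[R] D) (z w : A ⊗[R] C) :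
    map e.toLinearMap f.toLinearMap (z * w) =
      map e.toLinearMap f.toLinearMap z * map e.toLinearMap f.toLinearMap w :=
  map_mul (Algebra.TensorProduct.map (e : A →ₐ[R] B) (f : C →ₐ[R] D)) z w

theorem map_algEquiv_mul_one_tmul {B : Type*} [Semiring B] [Algebra R B] (e : A ≃ₐ[R] B)
    (z : A ⊗[R] A) (b : B) :
    map e.toLinearMap e.toLinearMap z * (1 ⊗ₜ[R] b) =
      map e.toLinearMap e.toLinearMap (z * (1 ⊗ₜ[R] e.symm b)) := by
  rw [map_algEquiv_mul, map_tmul, AlgEquiv.toLinearMap_apply, AlgEquiv.toLinearMap_apply,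
    map_one, AlgEquiv.apply_symm_apply]

end TensorProduct

section Deformation

variable {G R A : Type*} [Group G] [CommSemiring R] [Semiring A] [Algebra R A]

theorem MonoidHom.algEquiv_toLinearMap_comp (π : G →* (A ≃ₐ[R] A)) (p q : G) :
    (π p).toLinearMap ∘ₗ (π q).toLinearMap = (π (p * q)).toLinearMap := by
  rw [map_mul]
  rfl

def IsEquivariant (π : G →* (A ≃ₐ[R] A)) (Δ : A →ₗ[R] A ⊗[R] A) : Prop :=
  ∀ (p : G) (b : A), Δ (π p b) = map (π p).toLinearMap (π p).toLinearMap (Δ b)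

def IsDeformation (ℬ : G → Submodule R A) (π : G →* (A ≃ₐ[R] A))
    (Δ Δ' : A →ₗ[R] A ⊗[R] A) : Prop :=
  ∀ (b : A) (q : G), ∀ b' ∈ ℬ q,
    Δ' b * (1 ⊗ₜ[R] b') = map (π q⁻¹).toLinearMap LinearMap.id (Δ b * (1 ⊗ₜ[R] b'))

variable {ℬ : G → Submodule R A} {π : G →* (A ≃ₐ[R] A)} {Δ Δ' Δ'' : A →ₗ[R] A ⊗[R] A}

theorem IsDeformation.isEquivariant (hℬ : ⨆ q, ℬ q = ⊤)
    (hπℬ : ∀ p q, ∀ b ∈ ℬ q, π p b ∈ ℬ (p * q * p⁻¹))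
    (hΔ : IsEquivariant π Δ) (h : IsDeformation ℬ π Δ Δ') : IsEquivariant π Δ' := by
  intro p b
  refine eq_of_forall_mul_one_tmul_eq hℬ fun q b' hb' => ?_
  have hsymm : (π p).symm b' = π p⁻¹ b' := by rw [map_inv]; rfl
  have hb'' : π p⁻¹ b' ∈ ℬ (p⁻¹ * q * p) := by simpa using hπℬ p⁻¹ q b' hb'
  calc Δ' (π p b) * (1 ⊗ₜ[R] b')
      = map (π q⁻¹).toLinearMap LinearMap.id
          (map (π p).toLinearMap (π p).toLinearMap (Δ b * (1 ⊗ₜ[R] π p⁻¹ b'))) := by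
        rw [h _ _ _ hb', hΔ, map_algEquiv_mul_one_tmul, hsymm]
    _ = map (π p).toLinearMap (π p).toLinearMap
          (map (π (p⁻¹ * q * p)⁻¹).toLinearMap LinearMap.id (Δ b * (1 ⊗ₜ[R] π p⁻¹ b'))) := by
        simp only [map_map, MonoidHom.algEquiv_toLinearMap_comp, LinearMap.id_comp,
          LinearMap.comp_id]
        group
    _ = map (π p).toLinearMap (π p).toLinearMap (Δ' b) * (1 ⊗ₜ[R] b') := by
        rw [← h b _ _ hb'', map_algEquiv_mul_one_tmul, hsymm]

theorem IsDeformation.eq_of_isDeformation_inv (hℬ : ⨆ q, ℬ q = ⊤)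
    (h : IsDeformation ℬ π Δ Δ') (h' : IsDeformation (fun q => ℬ q⁻¹) π Δ' Δ'') : Δ'' = Δ := by
  ext b : 1
  refine eq_of_forall_mul_one_tmul_eq hℬ fun q b' hb' => ?_
  rw [h' b q⁻¹ b' (by simpa only [inv_inv]), h b q b' hb', map_map,
    MonoidHom.algEquiv_toLinearMap_comp, inv_inv, mul_inv_cancel, map_one,
    AlgEquiv.one_toLinearMap, LinearMap.id_comp, Module.End.one_eq_id, map_id, LinearMap.id_apply]

end Deformation

theorem crossing_double_deformation_general
    {G : Type*} [Group G] [DecidableEq G] {B : Type*} [Ring B] [HopfAlgebra ℂ B]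
    (ℬ : G → Submodule ℂ B)
    (hdec : DirectSum.IsInternal ℬ)
    -- the admissible action
    (π : G →* (B ≃ₐ[ℂ] B))
    (hπΔ : ∀ (p : G) (b : B), Coalgebra.comul (R := ℂ) (π p b) =
      (TensorProduct.map (π p).toLinearMap (π p).toLinearMap) (Coalgebra.comul (R := ℂ) b))
    (hcross : ∀ p q : G, (ℬ q).map (π p).toLinearMap = ℬ (p * q * p⁻¹))
    -- the deformed comultiplication
    (Δt : B →ₗ[ℂ] B ⊗[ℂ] B)
    (hΔt : ∀ (b : B) (q : G), ∀ b' ∈ ℬ q,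
      Δt b * (1 ⊗ₜ[ℂ] b') = (TensorProduct.map (π q⁻¹).toLinearMap LinearMap.id)
        (Coalgebra.comul (R := ℂ) b * (1 ⊗ₜ[ℂ] b')))
    -- the second deformation, built from (B̃, Δ̃) with grading B̃_q = B_{q⁻¹}
    (Δtt : B →ₗ[ℂ] B ⊗[ℂ] B)
    (hΔtt : ∀ (b : B) (q : G), ∀ b' ∈ ℬ q⁻¹,
      Δtt b * (1 ⊗ₜ[ℂ] b') = (TensorProduct.map (π q⁻¹).toLinearMap LinearMap.id)
        (Δt b * (1 ⊗ₜ[ℂ] b'))) :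
    (∀ (p : G) (b : B),
      Δt (π p b) = (TensorProduct.map (π p).toLinearMap (π p).toLinearMap) (Δt b)) ∧
    Δtt = (Coalgebra.comul (R := ℂ) (A := B)) := by
  have hℬ : ⨆ p, ℬ p = ⊤ := hdec.submodule_iSup_eq_top
  have hπℬ : ∀ p q, ∀ b ∈ ℬ q, π p b ∈ ℬ (p * q * p⁻¹) := fun p q b hb =>
    hcross p q ▸ Submodule.mem_map_of_mem hb
  exact ⟨IsDeformation.isEquivariant hℬ hπℬ hπΔ hΔt,
    IsDeformation.eq_of_isDeformation_inv hℬ hΔt hΔtt⟩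

/-- if `π` is a crossing of `G` on `B`, then each `π_p` respects
the deformed comultiplication (`Δ̃ ∘ π_p = (π_p ⊗ π_p) ∘ Δ̃`), so `π` is again a
crossing on `B̃ = (B, Δ̃)`; moreover the second deformation `Δ̃̃` (built from
`(B̃, Δ̃, π)` with the new grading `B̃_q = B_{q⁻¹}`) recovers `Δ`. -/
theorem crossing_double_deformation
    {G : Type*} [Group G] [DecidableEq G] {B : Type*} [Ring B] [HopfAlgebra ℂ B]
    (ℬ : G → Submodule ℂ B)
    (hdec : DirectSum.IsInternal ℬ)
    (horth : ∀ p q : G, p ≠ q → ∀ a ∈ ℬ p, ∀ b ∈ ℬ q, a * b = 0)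
    (hcograded₁ : ∀ p q : G,
      Submodule.span ℂ {z | ∃ a ∈ ℬ (p * q), ∃ b ∈ ℬ q,
        z = (Coalgebra.comul (R := ℂ) a) * (1 ⊗ₜ[ℂ] b)} = tensorSub (ℬ p) (ℬ q))
    (hcograded₂ : ∀ p q : G,
      Submodule.span ℂ {z | ∃ a ∈ ℬ (p * q), ∃ b ∈ ℬ p,
        z = (b ⊗ₜ[ℂ] 1) * (Coalgebra.comul (R := ℂ) a)} = tensorSub (ℬ p) (ℬ q))
    -- the admissible action
    (π : G →* (B ≃ₐ[ℂ] B))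
    (hπΔ : ∀ (p : G) (b : B), Coalgebra.comul (R := ℂ) (π p b) =
      (TensorProduct.map (π p).toLinearMap (π p).toLinearMap) (Coalgebra.comul (R := ℂ) b))
    (hcross : ∀ p q : G, (ℬ q).map (π p).toLinearMap = ℬ (p * q * p⁻¹))
    -- the deformed comultiplication
    (Δt : B →ₗ[ℂ] B ⊗[ℂ] B)
    (hΔt : ∀ (b : B) (q : G), ∀ b' ∈ ℬ q,
      Δt b * (1 ⊗ₜ[ℂ] b') = (TensorProduct.map (π q⁻¹).toLinearMap LinearMap.id)
        (Coalgebra.comul (R := ℂ) b * (1 ⊗ₜ[ℂ] b')))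
    -- each component has a local unit
    (u : G → B)
    (hu : ∀ p : G, u p ∈ ℬ p ∧ ∀ x ∈ ℬ p, u p * x = x ∧ x * u p = x)
    -- the second deformation, built from (B̃, Δ̃) with grading B̃_q = B_{q⁻¹}
    (Δtt : B →ₗ[ℂ] B ⊗[ℂ] B)
    (hΔtt : ∀ (b : B) (q : G), ∀ b' ∈ ℬ q⁻¹,
      Δtt b * (1 ⊗ₜ[ℂ] b') = (TensorProduct.map (π q⁻¹).toLinearMap LinearMap.id)
        (Δt b * (1 ⊗ₜ[ℂ] b'))) :
    (∀ (p : G) (b : B),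
      Δt (π p b) = (TensorProduct.map (π p).toLinearMap (π p).toLinearMap) (Δt b)) ∧
    Δtt = (Coalgebra.comul (R := ℂ) (A := B)) :=
  crossing_double_deformation_general ℬ hdec π hπΔ hcross Δt hΔt Δtt hΔtt
end
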